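/- arXiv:2405.10836 — 11 statements merged into one kernel-verified Lean document; each statement's English description precedes it below -/
import Mathlib

section
/- For all natural numbers d1, d2 with 2 ≤ d1 ≤ d2, there exists a real number k_* in the open interval (-d1/d2, 0) such that P_X(k) < 0 for all k ∈ (-d1/d2, k_*), P_X(k_*) = 0, and P_X(k) > 0 for all k ∈ (k_*, 1). -/
noncomputable section

namespace PaperDefs

/-- The polynomial `P_X`. -/
def PX (d1 d2 k : ℝ) : ℝ :=
  ((d2*(d1*d2 - 2*d1 - d2 + 1)*k^2 + 2*(d2-1)*(d1-1)*d1*k + d1^2*(d1-1))*(1-k))/(d1*(d1+d2-1))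

/-- The polynomial `Q_X`. -/
def QX (d1 d2 k : ℝ) : ℝ :=
  4*k*(1 + d2*k/(2*d1))*(d1 + d2*k + d2*k/(2*d1)) +
    (2 + 2*k + 3*d2*k/d1)*(d1 + d2*k^2 - (d1 + d2*k)^2)/(d1+d2-1)

/-- The coefficient `ω₂`. -/
def omega2 (d1 d2 k : ℝ) : ℝ :=
  (2*d1^2*d2^2 - d1*d2^3 + d2^3 - d2^2)*k^3
    + (4*d1^3*d2 - 4*d1^2*d2^2 - 2*d1^2*d2 + 4*d1*d2^2 - 2*d1*d2)*k^2
    + (2*d1^4 - 5*d1^3*d2 - 2*d1^3 + 5*d1^2*d2)*k - 2*d1^4 + 2*d1^3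

/-- The coefficient `ω₁`. -/
def omega1 (d1 d2 k : ℝ) : ℝ :=
  (d1*d2^3 - 4*d1*d2^2 - d2^3 + 3*d2^2)*k^3
    + (2*d1^2*d2^2 - 8*d1^2*d2 + 8*d1*d2 - 2*d2^2)*k^2
    + (d1^3*d2 - 4*d1^3 + 5*d1^2*d2 + 4*d1^2 - 6*d1*d2)*k + 4*d1^3 - 4*d1^2

/-- The coefficient `ω₀`. -/
def omega0 (d1 d2 k : ℝ) : ℝ :=
  (d1*d2^3 - 2*d1*d2^2 - d2^3 - 2*d1*d2 + d2^2)*k^2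
    + (2*d1^2*d2^2 - 2*d1^2*d2 - 2*d1*d2^2 - 4*d1^2 + 4*d1*d2)*k
    + d1^3*d2 - d1^2*d2 + 4*d1^2

/-- The function `ω(A,k,l)`. -/
def omega (d1 d2 A k l : ℝ) : ℝ :=
  (1/(d1^2*(d1+d2-1))) * (((2*d1 + d2*k)/d2)*omega2 d1 d2 k*A*l^2
    + (d2-1)*k*omega1 d1 d2 k*l - (d1-1)*k^2*omega0 d1 d2 k)

/-- The function `P_Y(A,k,l)`. -/
def PY (d1 d2 A k l : ℝ) : ℝ :=
  -((d1*((d1+d2)+d1-2) + d2*((d1+d2)+d1-1)*k)/(d2*((d1+d2)-1)))*A*l^2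
    + ((d2-1)*(d1 + d2*k - 1)/((d1+d2)-1))*l
    - ((d1-1)*(d1 + d2*k - k)/((d1+d2)-1))

/-- The function `ν₁(A,k)`. -/
def nu1 (d1 d2 A k : ℝ) : ℝ := d2*(d2-1)*k/(d1*A*(2*d1 + d2*k))

/-- The constant `Ψ`. -/
def Psi (d1 d2 : ℝ) : ℝ :=
  ((4*(d1-1)*(d1+d2)^2 + d2^2)*(3*(d1+d2) + d1)/((2*(d1+d2)^2 + (d1+d2) + d1)^2*d1^2))
    *(d2*(d2-1)^2/(4*(d1-1)))

/-- The function `ζ(A,k,l)`. -/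
def zeta (d1 d2 A k l : ℝ) : ℝ :=
  (-((d1 + d2*k)*(d1 + d2*k - 1)*(2*d1 + d2*k))/d2)*A*l^2
    + (((d2-1)/d1)*(d1 + d2*k)*(d2*k^2 + d2*(d1-1)*k + d1*(d1-1))
       - ((1-k)/d1)*((d1*d2^2 - 2*d1*d2 - d2^2 + d2)*k^2
          + (2*d1^2*d2 - 2*d1^2 - 2*d1*d2 + 2*d1)*k + d1^2*(d1-1))
         *(d2 - 1 - 2*d1^2*(d1+1)*A/(d2*(d2-1))))*l
    + (-(k*(d1-1)*(d1 + d2*k)*(d1 + d2*k + 1 - 2*k)))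

/-- The polynomial `β₀`. -/
def beta0 (d1 d2 k : ℝ) : ℝ :=
  (d1*d2^2 - 2*d1*d2 - d2^2 + d2)*k^2 + (2*d1^2*d2 - 2*d1^2 - d1*d2 + 2*d1)*k + d1^3 - d1

/-- The polynomial `β₁`. -/
def beta1 (d1 d2 k : ℝ) : ℝ :=
  (2*d1^2*d2^2 + d1*d2^3 - 4*d1^2*d2 - 2*d1*d2^2 - d2^3 - 2*d1*d2 + 2*d2)*k^2
    + (4*d1^3*d2 + 2*d1^2*d2^2 - 4*d1^3 - 2*d1^2*d2 - 3*d1*d2^2 + 4*d1*d2 + d2^2 + 4*d1 - 2*d2)*k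
    + 2*d1^4 + d1^3*d2 - 2*d1^2*d2 + 2*d1^2 + d1*d2 - 4*d1

/-- The polynomial `β₂`. -/
def beta2 (d1 d2 k : ℝ) : ℝ :=
  (d1*d2^3 - 2*d1*d2^2 - d2^3 + d2^2)*k^3
    + (2*d1^2*d2^2 - 4*d1^2*d2 - 2*d1*d2^2 + 2*d1*d2)*k^2
    + (d1^3*d2 - 2*d1^3 + d1^2*d2)*k + 2*d1^3

/-- The polynomial `ρ₁`. -/
def rho1 (d1 d2 k : ℝ) : ℝ :=
  4*d1^2*(d1-1)*(2*d2^2*k^2 + d2*k^2 + 4*d1*d2*k + 2*d1*k + 2*d1^2)^2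

/-- The polynomial `ρ₀`. -/
def rho0 (d1 d2 k : ℝ) : ℝ :=
  (d2-1)^2*k*d2*(4*d1 + 3*d2*k)*(4*(d1-1)*(d1 + d2*k)^2 + d2^2*k^2)

/-- The function `Ω`. -/
def OmegaFun (d1 d2 k : ℝ) : ℝ :=
  -(omega1 d1 d2 k^2*d2*(d2-1)^2)/(4*(d1-1)*(2*d1 + d2*k)*omega0 d1 d2 k*omega2 d1 d2 k)

/-- The polynomial `α₄`. -/
def alpha4 (d1 d2 k : ℝ) : ℝ :=
  (-d1^3*d2^3 + d1^2*d2^4 + 4*d1^3*d2^2 - 2*d1^2*d2^3 - 2*d1*d2^4 - d1^2*d2^2 + 4*d1*d2^3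
      + d2^4 - d1*d2^2 - d2^3)*k^3
    + (-2*d1^4*d2^2 + 4*d1^3*d2^3 + 8*d1^4*d2 - 8*d1^3*d2^2 - 8*d1^2*d2^3 - 8*d1^3*d2
      + 14*d1^2*d2^2 + 4*d1*d2^3 - 4*d1*d2^2)*k^2
    + (-d1^5*d2 + 5*d1^4*d2^2 + 4*d1^5 - 10*d1^4*d2 - 10*d1^3*d2^2 - 8*d1^4 + 17*d1^3*d2
      + 5*d1^2*d2^2 + 4*d1^3 - 6*d1^2*d2)*k
    + 2*d1^5*d2 - 4*d1^5 - 4*d1^4*d2 + 8*d1^4 + 2*d1^3*d2 - 4*d1^3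

/-- The function `ω̃₂`. -/
def omegaTilde2 (d1 d2 κ : ℝ) : ℝ :=
  1 + (d1-1)*(1-κ)*((-2*d1 + d2 - 2)*κ^2 + (2*d1 - 3*d2)*κ + 2*d2)/κ^3

/-- The factor `θ_{2a}`. -/
def theta2a (d1 d2 k : ℝ) : ℝ :=
  (d1*d2^3 - 2*d1*d2^2 - d2^3 - 2*d1*d2 + d2^2)*k^2
    + (2*d1^2*d2^2 - 2*d1^2*d2 - 2*d1*d2^2 - 4*d1^2 + 4*d1*d2)*k
    + d1^3*d2 - d1^2*d2 + 4*d1^2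

/-- The factor `θ_{2b}`. -/
def theta2b (d1 d2 k : ℝ) : ℝ :=
  (2*d1^2*d2^2 - d1*d2^3 + d2^3 - d2^2)*k^3
    + (4*d1^3*d2 - 4*d1^2*d2^2 - 2*d1^2*d2 + 4*d1*d2^2 - 2*d1*d2)*k^2
    + (2*d1^4 - 5*d1^3*d2 - 2*d1^3 + 5*d1^2*d2)*k - 2*d1^4 + 2*d1^3

/-- The factor `θ_{0a}`. -/
def theta0a (d1 d2 k : ℝ) : ℝ :=
  k*d2^2*(d2-1)^4*(2*d1 + d2*k)*((2*d1*d2 - 2*d1 + d2)*k + 2*d1^2 + 2*d1)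

/-- The factor `θ_{0b}`. -/
def theta0b (d1 d2 k : ℝ) : ℝ :=
  (2*d1^2 - 1)*d2^2*k^2 + (4*d1^3 - 2*d1^2 - 2*d1)*d2*k + 2*d1^3*(d1-1)

/-- The coefficient `θ₂`. -/
def theta2 (d1 d2 k : ℝ) : ℝ := 4*d1^4*(d1+1)^2*theta2a d1 d2 k*theta2b d1 d2 k

/-- The coefficient `θ₀`. -/
def theta0 (d1 d2 k : ℝ) : ℝ := theta0a d1 d2 k*theta0b d1 d2 k

/-- The function `F` of Statement 18. -/
def Ffun (d1 d2 k : ℝ) : ℝ :=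
  d2*(d2-1)^2*beta2 d1 d2 k/(d1^2*(2*d1 + d2*k)*omega0 d1 d2 k)

end PaperDefs

open PaperDefs

/-- Auxiliary quadratic: the numerator factor of `P_X`. -/
def Qpoly (D1 D2 k : ℝ) : ℝ :=
  D2*(D1*D2 - 2*D1 - D2 + 1)*k^2 + 2*(D2-1)*(D1-1)*D1*k + D1^2*(D1-1)

lemma Qslope (D1 D2 : ℝ) (hd1 : 2 ≤ D1) (hd2 : D1 ≤ D2) (s : ℝ)
    (hs1 : -(2*D1) ≤ D2*s) (hs2 : s ≤ 0) :
    0 < D2*(D1*D2 - 2*D1 - D2 + 1)*s + 2*(D2-1)*(D1-1)*D1 := by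
  have hD2 : (0:ℝ) < D2 := by linarith
  rcases le_or_gt 0 (D1*D2 - 2*D1 - D2 + 1) with hA | hA
  · nlinarith [mul_nonneg hA (show (0:ℝ) ≤ D2*s + 2*D1 by linarith)]
  · nlinarith [mul_nonneg (mul_nonneg hD2.le (show (0:ℝ) ≤ -(D1*D2 - 2*D1 - D2 + 1) by linarith))
      (show (0:ℝ) ≤ -s by linarith),
      mul_pos (mul_pos (show (0:ℝ) < D2 - 1 by linarith) (show (0:ℝ) < D1 - 1 by linarith))
        (show (0:ℝ) < D1 by linarith)]

lemma Qmono (D1 D2 : ℝ) (hd1 : 2 ≤ D1) (hd2 : D1 ≤ D2) :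
    StrictMonoOn (fun k => Qpoly D1 D2 k) (Set.Icc (-D1/D2) 0) := by
  have hD2 : (0:ℝ) < D2 := by linarith
  intro x hx y hy hxy
  have hdd : D2 * (-D1/D2) = -D1 := by field_simp
  have hx1 : -(D1) ≤ D2*x := by
    have := mul_le_mul_of_nonneg_left hx.1 hD2.le
    linarith
  have hy1 : -(D1) ≤ D2*y := by
    have := mul_le_mul_of_nonneg_left hy.1 hD2.le
    linarith
  have hs1 : -(2*D1) ≤ D2*(x+y) := by nlinarith
  have hs2 : x + y ≤ 0 := by linarith [hx.2, hy.2]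
  have hp := Qslope D1 D2 hd1 hd2 (x+y) hs1 hs2
  have hdiff : Qpoly D1 D2 y - Qpoly D1 D2 x
      = (y - x) * (D2*(D1*D2 - 2*D1 - D2 + 1)*(x+y) + 2*(D2-1)*(D1-1)*D1) := by
    simp only [Qpoly]; ring
  have := mul_pos (sub_pos.2 hxy) hp
  simp only
  linarith [hdiff, this]

lemma Qleft (D1 D2 : ℝ) (hd1 : 2 ≤ D1) (hd2 : D1 ≤ D2) :
    Qpoly D1 D2 (-D1/D2) < 0 := by
  have hD2 : (0:ℝ) < D2 := by linarith
  have hval : Qpoly D1 D2 (-D1/D2) = -(D1^2)/D2 := by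
    simp only [Qpoly]
    field_simp
    ring
  rw [hval]
  exact div_neg_of_neg_of_pos (by nlinarith) hD2

lemma Qzero (D1 D2 : ℝ) (hd1 : 2 ≤ D1) (hd2 : D1 ≤ D2) : 0 < Qpoly D1 D2 0 := by
  simp only [Qpoly]; nlinarith

lemma Qone (D1 D2 : ℝ) (hd1 : 2 ≤ D1) (hd2 : D1 ≤ D2) : 0 < Qpoly D1 D2 1 := by
  simp only [Qpoly]
  nlinarith [mul_nonneg (mul_nonneg (show (0:ℝ) ≤ D1 by linarith) (show (0:ℝ) ≤ D1-1 by linarith))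
      (show (0:ℝ) ≤ D1-2 by linarith),
    mul_nonneg (mul_nonneg (show (0:ℝ) ≤ 2*D1 by linarith) (show (0:ℝ) ≤ D2 by linarith))
      (show (0:ℝ) ≤ D1-2 by linarith),
    mul_nonneg (sq_nonneg D2) (show (0:ℝ) ≤ D1-1 by linarith)]

lemma Qright (D1 D2 : ℝ) (hd1 : 2 ≤ D1) (hd2 : D1 ≤ D2) (k : ℝ)
    (hk0 : 0 < k) (hk1 : k < 1) : 0 < Qpoly D1 D2 k := by
  have h1 := Qone D1 D2 hd1 hd2
  have h0 := Qzero D1 D2 hd1 hd2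
  rcases le_or_gt (D1*D2 - 2*D1 - D2 + 1) 0 with hA | hA
  · have hD2 : (0:ℝ) < D2 := by linarith
    have hid : Qpoly D1 D2 k
        = (1-k)*(Qpoly D1 D2 0) + k*(Qpoly D1 D2 1)
          + (D2*(-(D1*D2 - 2*D1 - D2 + 1)))*(k*(1-k)) := by
      simp only [Qpoly]; ring
    have ha' : 0 ≤ (D2*(-(D1*D2 - 2*D1 - D2 + 1)))*(k*(1-k)) :=
      mul_nonneg (mul_nonneg hD2.le (by linarith)) (mul_nonneg hk0.le (by linarith))
    nlinarith [mul_pos (show (0:ℝ) < 1-k by linarith) h0, mul_pos hk0 h1]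
  · simp only [Qpoly]
    nlinarith [mul_pos (mul_pos (show (0:ℝ) < D2 by linarith) hA) (mul_pos hk0 hk0),
      mul_pos (mul_pos (mul_pos (show (0:ℝ) < 2*(D2-1) by linarith)
        (show (0:ℝ) < D1-1 by linarith)) (show (0:ℝ) < D1 by linarith)) hk0,
      mul_pos (mul_pos (show (0:ℝ) < D1 by linarith) (show (0:ℝ) < D1 by linarith))
        (show (0:ℝ) < D1-1 by linarith)]

/-- there is `k_* ∈ (-d1/d2, 0)` with `P_X < 0` on `(-d1/d2, k_*)`,
`P_X(k_*) = 0`, and `P_X > 0` on `(k_*, 1)`. -/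
theorem statement0 (d1 d2 : ℕ) (h1 : 2 ≤ d1) (h2 : d1 ≤ d2) :
    ∃ kstar : ℝ, kstar ∈ Set.Ioo (-(d1:ℝ)/(d2:ℝ)) 0 ∧
      (∀ k ∈ Set.Ioo (-(d1:ℝ)/(d2:ℝ)) kstar, PX d1 d2 k < 0) ∧
      PX d1 d2 kstar = 0 ∧
      (∀ k ∈ Set.Ioo kstar (1:ℝ), 0 < PX d1 d2 k) := by
  have hd1 : (2:ℝ) ≤ (d1:ℝ) := by exact_mod_cast h1
  have hd2 : (d1:ℝ) ≤ (d2:ℝ) := by exact_mod_cast h2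
  set D1 := (d1:ℝ) with hD1def
  set D2 := (d2:ℝ) with hD2def
  have hD1 : (0:ℝ) < D1 := by linarith
  have hD2 : (0:ℝ) < D2 := by linarith
  have hden : 0 < D1*(D1+D2-1) := by nlinarith
  have hPX : ∀ k : ℝ, PX D1 D2 k = Qpoly D1 D2 k * (1-k) / (D1*(D1+D2-1)) := by
    intro k; simp only [PX, Qpoly]
  have hmono := Qmono D1 D2 hd1 hd2
  have hab : -D1/D2 < 0 := div_neg_of_neg_of_pos (by linarith) hD2
  have hcont : Continuous (fun k => Qpoly D1 D2 k) := by
    simp only [Qpoly]; continuity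
  have hmem : (0:ℝ) ∈ Set.Ioo (Qpoly D1 D2 (-D1/D2)) (Qpoly D1 D2 0) :=
    ⟨Qleft D1 D2 hd1 hd2, Qzero D1 D2 hd1 hd2⟩
  obtain ⟨kstar, hkmem, hfk⟩ :=
    intermediate_value_Ioo hab.le hcont.continuousOn hmem
  simp only at hfk
  refine ⟨kstar, hkmem, ?_, ?_, ?_⟩
  · intro k hk
    rw [hPX k]
    have hk1 : k < 1 := by linarith [hk.2, hkmem.2]
    have hfkneg : Qpoly D1 D2 k < 0 := by
      have := hmono (Set.mem_Icc.2 ⟨hk.1.le, by linarith [hk.2, hkmem.2]⟩)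
        (Set.mem_Icc.2 ⟨hkmem.1.le, hkmem.2.le⟩) hk.2
      simp only at this
      rw [hfk] at this; exact this
    exact div_neg_of_neg_of_pos (mul_neg_of_neg_of_pos hfkneg (by linarith)) hden
  · rw [hPX kstar, hfk]; ring
  · intro k hk
    rw [hPX k]
    have hk1 : k < 1 := hk.2
    have hfkpos : 0 < Qpoly D1 D2 k := by
      rcases le_or_gt k 0 with hk0 | hk0
      · have := hmono (Set.mem_Icc.2 ⟨hkmem.1.le, hkmem.2.le⟩)
          (Set.mem_Icc.2 ⟨by linarith [hkmem.1, hk.1], hk0⟩) hk.1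
        simp only at this
        rw [hfk] at this; exact this
      · exact Qright D1 D2 hd1 hd2 k hk0 hk1
    exact div_pos (mul_pos hfkpos (by linarith)) hden
end
end

section
/- For all natural numbers d1, d2 with 2 ≤ d1 ≤ d2 and every real k ∈ [-d1/d2, 1], one has ω2(k) < 0 and ω0(k) > 0. -/
noncomputable section

open PaperDefs

set_option maxHeartbeats 1000000 in
private lemma aux_key (a b u : ℝ) (ha : 2 ≤ a) (hab : a ≤ b) (hu0 : 0 ≤ u)
    (hu1 : u ≤ a + b) :
    (2*a^2 - a*b + b - 1)*u^3 - (a*(2*a^2 + a*b + 2*a - b - 1))*u^2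
      + (a^2*(2*a+1))*u - a^3 < 0 := by
  have hb2 : (2:ℝ) ≤ b := le_trans ha hab
  rcases le_or_gt (2*a^2 - a*b + b - 1) 0 with hc | hc
  · -- case c ≤ 0
    have ha0 : (0:ℝ) < a := by linarith
    have hm : 0 < a*(2*a^2 + a*b + 2*a - b - 1) := by
      apply mul_pos ha0
      nlinarith [mul_nonneg (show (0:ℝ) ≤ a - 2 by linarith) (show (0:ℝ) ≤ b by linarith)]
    have hmm : 0 < a^4*(4*a^2 + 4*a*b + 4*a - 4*b - 5) := by
      apply mul_pos (by positivity)
      nlinarith [mul_nonneg (show (0:ℝ) ≤ b - a by linarith) (show (0:ℝ) ≤ a - 1 by linarith),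
        mul_nonneg (show (0:ℝ) ≤ a - 2 by linarith) (show (0:ℝ) ≤ a by linarith)]
    have hT : 0 ≤ 4*(a*(2*a^2 + a*b + 2*a - b - 1))*(-(2*a^2 - a*b + b - 1))*u^3 := by
      apply mul_nonneg (mul_nonneg (by linarith) (by linarith))
      positivity
    have hId : 4*(a*(2*a^2 + a*b + 2*a - b - 1)) *
        (-((2*a^2 - a*b + b - 1)*u^3 - (a*(2*a^2 + a*b + 2*a - b - 1))*u^2
          + (a^2*(2*a+1))*u - a^3)) =
        (2*(a*(2*a^2 + a*b + 2*a - b - 1))*u - a^2*(2*a+1))^2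
          + a^4*(4*a^2 + 4*a*b + 4*a - 4*b - 5)
          + 4*(a*(2*a^2 + a*b + 2*a - b - 1))*(-(2*a^2 - a*b + b - 1))*u^3 := by ring
    nlinarith [hId, hm, hmm, hT,
      sq_nonneg (2*(a*(2*a^2 + a*b + 2*a - b - 1))*u - a^2*(2*a+1))]
  · -- case c > 0
    rcases le_or_gt u a with hua | hua
    · -- u ≤ a
      have ha0 : (0:ℝ) < a := by linarith
      have hmp : 0 < 2*a*(a*b + a - b) := by
        apply mul_pos (by linarith)
        nlinarith [mul_nonneg (show (0:ℝ) ≤ a - 2 by linarith) (show (0:ℝ) ≤ b by linarith)]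
      have hmargin : 0 < a^4*(8*a*b - 8*b - 4*a^2 + 4*a - 1) := by
        apply mul_pos (by positivity)
        nlinarith [mul_nonneg (show (0:ℝ) ≤ b - a by linarith) (show (0:ℝ) ≤ a - 1 by linarith),
          mul_nonneg (show (0:ℝ) ≤ a - 2 by linarith) (show (0:ℝ) ≤ a by linarith)]
      have hT : 0 ≤ 4*(2*a*(a*b + a - b))*(2*a^2 - a*b + b - 1)*(u^2*(a - u)) := by
        apply mul_nonneg (mul_nonneg (by linarith) (by linarith))
        exact mul_nonneg (sq_nonneg u) (by linarith)
      have hId : 4*(2*a*(a*b + a - b)) *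
          (-((2*a^2 - a*b + b - 1)*u^3 - (a*(2*a^2 + a*b + 2*a - b - 1))*u^2
            + (a^2*(2*a+1))*u - a^3)) =
          4*(2*a*(a*b + a - b))*(2*a^2 - a*b + b - 1)*(u^2*(a - u))
            + (2*(2*a*(a*b + a - b))*u - a^2*(2*a+1))^2
            + a^4*(8*a*b - 8*b - 4*a^2 + 4*a - 1) := by ring
      nlinarith [hId, hmp, hmargin, hT,
        sq_nonneg (2*(2*a*(a*b + a - b))*u - a^2*(2*a+1))]
    · -- a < u
      have hga : (2*a^2 - a*b + b - 1)*a^2 - (a*(2*a^2 + a*b + 2*a - b - 1))*a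
          + a^2*(2*a+1) ≤ 0 := by
        nlinarith [mul_nonneg (show (0:ℝ) ≤ a - 2 by linarith) (show (0:ℝ) ≤ b - 2 by linarith),
          sq_nonneg a]
      have hgab : (2*a^2 - a*b + b - 1)*(a+b)^2 - (a*(2*a^2 + a*b + 2*a - b - 1))*(a+b)
          + a^2*(2*a+1) ≤ 0 := by
        have p1 : 0 ≤ (a-1)*b^2*(b-a) := by
          apply mul_nonneg (mul_nonneg (by linarith) (sq_nonneg b)); linarith
        have p2 : 0 ≤ (2*a^2 - 4*a + 1)*((b-a)*(b+a)) := by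
          apply mul_nonneg (by nlinarith)
          apply mul_nonneg <;> linarith
        have p3 : 0 ≤ 2*a^3*(a-2) := by
          apply mul_nonneg (by positivity); linarith
        have p4 : 0 < a*b := by nlinarith
        nlinarith [p1, p2, p3, p4]
      have t1 : 0 ≤ (a + b - u) * (-((2*a^2 - a*b + b - 1)*a^2
          - (a*(2*a^2 + a*b + 2*a - b - 1))*a + a^2*(2*a+1))) := by
        apply mul_nonneg <;> linarith
      have t2 : 0 ≤ (u - a) * (-((2*a^2 - a*b + b - 1)*(a+b)^2
          - (a*(2*a^2 + a*b + 2*a - b - 1))*(a+b) + a^2*(2*a+1))) := by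
        apply mul_nonneg <;> linarith
      have t3 : 0 ≤ b*(2*a^2 - a*b + b - 1)*((u - a)*(a + b - u)) := by
        apply mul_nonneg (mul_nonneg (by linarith) (by linarith))
        apply mul_nonneg <;> linarith
      have hchord : b*((2*a^2 - a*b + b - 1)*u^2 - (a*(2*a^2 + a*b + 2*a - b - 1))*u
            + a^2*(2*a+1)) =
          (a + b - u)*((2*a^2 - a*b + b - 1)*a^2 - (a*(2*a^2 + a*b + 2*a - b - 1))*a
            + a^2*(2*a+1))
          + (u - a)*((2*a^2 - a*b + b - 1)*(a+b)^2 - (a*(2*a^2 + a*b + 2*a - b - 1))*(a+b)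
            + a^2*(2*a+1))
          - b*(2*a^2 - a*b + b - 1)*((u - a)*(a + b - u)) := by ring
      have hbg : b*((2*a^2 - a*b + b - 1)*u^2 - (a*(2*a^2 + a*b + 2*a - b - 1))*u
          + a^2*(2*a+1)) ≤ 0 := by linarith
      have hg : (2*a^2 - a*b + b - 1)*u^2 - (a*(2*a^2 + a*b + 2*a - b - 1))*u
          + a^2*(2*a+1) ≤ 0 := by
        by_contra hcon
        push_neg at hcon
        nlinarith [mul_pos (show (0:ℝ) < b by linarith) hcon]
      have hug : 0 ≤ u * (-((2*a^2 - a*b + b - 1)*u^2 - (a*(2*a^2 + a*b + 2*a - b - 1))*u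
          + a^2*(2*a+1))) := mul_nonneg hu0 (by linarith)
      have ha3 : 0 < a^3 := by positivity
      nlinarith [hug, ha3]



set_option maxHeartbeats 1000000 in
/-- for every `k ∈ [-d1/d2, 1]`, `ω₂(k) < 0` and `ω₀(k) > 0`. -/
theorem statement1 (d1 d2 : ℕ) (h1 : 2 ≤ d1) (h2 : d1 ≤ d2) :
    ∀ k ∈ Set.Icc (-(d1:ℝ)/(d2:ℝ)) 1, omega2 d1 d2 k < 0 ∧ 0 < omega0 d1 d2 k := by
  intro k hk
  obtain ⟨hkl, hku⟩ := hk
  have ha : (2:ℝ) ≤ (d1:ℝ) := by exact_mod_cast h1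
  have hab : (d1:ℝ) ≤ (d2:ℝ) := by exact_mod_cast h2
  set a := (d1:ℝ) with ha_def
  set b := (d2:ℝ) with hb_def
  have hb0 : (0:ℝ) < b := by linarith
  have hka : -a ≤ b*k := by
    have := (div_le_iff₀ hb0).mp hkl
    nlinarith [this]
  have hu0 : 0 ≤ b*k + a := by linarith
  have hv0 : 0 ≤ 1 - k := by linarith
  have ha0 : (0:ℝ) < a := by linarith
  constructor
  · -- omega2 < 0
    have hu1 : b*k + a ≤ a + b := by nlinarith
    have hkey := aux_key a b (b*k + a) ha hab hu0 hu1
    have hId2 : b * omega2 a b k =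
        (2*a^2 - a*b + b - 1)*(b*k + a)^3 - (a*(2*a^2 + a*b + 2*a - b - 1))*(b*k + a)^2
          + (a^2*(2*a+1))*(b*k + a) - a^3 := by
      simp only [omega2]; ring
    by_contra hcon
    push_neg at hcon
    nlinarith [mul_nonneg hb0.le hcon, hId2, hkey]
  · -- omega0 > 0
    have hE1 : 0 ≤ a*b^4 - b^4 + a^2*b^3 - 3*a*b^3 + b^3 + a*b^2 - 2*a^2*b := by
      have p1 : 0 ≤ (a-1)*b^2*(b-a) := by
        apply mul_nonneg (mul_nonneg (by linarith) (sq_nonneg b)); linarith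
      have p2 : 0 ≤ (2*a^2 - 4*a + 1)*((b-a)*(b+a)) := by
        apply mul_nonneg (by nlinarith)
        apply mul_nonneg <;> linarith
      have p3 : 0 ≤ a*(b-a) := by apply mul_nonneg <;> linarith
      have p4 : 0 ≤ 2*a^3*(a-2) := by
        apply mul_nonneg (by positivity); linarith
      have hsum : 0 ≤ (a-1)*b^2*(b-a) + (2*a^2 - 4*a + 1)*((b-a)*(b+a)) + a*(b-a)
          + 2*a^3*(a-2) := by linarith
      have hIdE : a*b^4 - b^4 + a^2*b^3 - 3*a*b^3 + b^3 + a*b^2 - 2*a^2*b =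
          b*((a-1)*b^2*(b-a) + (2*a^2 - 4*a + 1)*((b-a)*(b+a)) + a*(b-a)
            + 2*a^3*(a-2)) := by ring
      rw [hIdE]
      exact mul_nonneg hb0.le hsum
    have hId0 : (a+b)*b^2*(omega0 a b k) =
        (a+b)*(a^2*b^2 + 2*a^3*b)
          + (b*k + a)*(b*(1-k)*(2*a*b^2*(1+a))
            + (b*k + a)*(a*b^4 - b^4 + a^2*b^3 - 3*a*b^3 + b^3 + a*b^2 - 2*a^2*b)) := by
      simp only [omega0]; ring
    have hP1 : 0 < (a+b)*(a^2*b^2 + 2*a^3*b) := by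
      apply mul_pos (by linarith)
      nlinarith [mul_pos (mul_pos ha0 ha0) (mul_pos hb0 hb0),
        mul_pos (mul_pos (mul_pos ha0 ha0) ha0) hb0]
    have hP2 : 0 ≤ (b*k + a)*(b*(1-k)*(2*a*b^2*(1+a))
        + (b*k + a)*(a*b^4 - b^4 + a^2*b^3 - 3*a*b^3 + b^3 + a*b^2 - 2*a^2*b)) := by
      apply mul_nonneg hu0
      apply add_nonneg
      · apply mul_nonneg (mul_nonneg hb0.le hv0)
        nlinarith [mul_pos ha0 (mul_pos hb0 hb0)]
      · exact mul_nonneg hu0 hE1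
    have hbig : 0 < (a+b)*b^2*(omega0 a b k) := by
      rw [hId0]; linarith
    by_contra hcon
    push_neg at hcon
    have hfac : 0 < (a+b)*b^2 := by positivity
    nlinarith [mul_nonneg hfac.le (neg_nonneg.mpr hcon), hbig]
end
end

section
/- For all natural numbers d1, d2 with 2 ≤ d1 ≤ d2 and every real k ∈ [-d1/d2, 1], one has P_X(k) + Q_X(k) < 0. -/
noncomputable section

open PaperDefs

lemma posside (x y k : ℝ) (hx : 2 ≤ x) (hxy : x ≤ y) (hk0 : 0 ≤ k) (hk1 : k ≤ 1) :
    y^3*k^3 - y^2*k^3 - x*y*k^2 - x*y*k^3 + x*y^2*k^2 + 3*x*y^2*k^3 - x*y^3*k^3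
    + 2*x^2*k - 2*x^2*k^2 + x^2*y*k - 2*x^2*y*k^2 + 4*x^2*y*k^3 - x^2*y^2*k^2 - x^2*y^2*k^3
    + x^3 - 3*x^3*k + 2*x^3*k^2 - x^3*y*k - x^4 + x^4*k < 0 := by
  have hx1 : (0:ℝ) ≤ x - 1 := by linarith
  have hx2 : (0:ℝ) ≤ x - 2 := by linarith
  have hyx : (0:ℝ) ≤ y - x := by linarith
  have hx0 : (0:ℝ) ≤ x := by linarith
  have hy0 : (0:ℝ) ≤ y := by linarith
  have hkk : (0:ℝ) ≤ k - k^3 := by nlinarith [mul_nonneg (mul_nonneg hk0 (by linarith : (0:ℝ) ≤ 1-k)) (by linarith : (0:ℝ) ≤ 1+k)]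
  have hk23 : (0:ℝ) ≤ k^2 - k^3 := mul_nonneg (sq_nonneg k) (by linarith : (0:ℝ) ≤ 1-k) |>.trans_eq (by ring)
  have hk3 : (0:ℝ) ≤ k^3 := by positivity
  have hy2 : (0:ℝ) ≤ y^2 - 2*x := by nlinarith
  have h8 : (8:ℝ) ≤ x^3*(x-1) := by nlinarith [sq_nonneg x, sq_nonneg (x-2)]
  nlinarith [mul_nonneg (mul_nonneg (mul_nonneg hx1 (sq_nonneg x)) hyx) hkk,
    mul_nonneg (mul_nonneg hx1 (sq_nonneg x)) hkk,
    mul_nonneg (mul_nonneg (mul_nonneg hx0 (by linarith : (0:ℝ) ≤ 2*x+1)) hy0) hk23,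
    mul_nonneg (mul_nonneg (mul_nonneg hx1 hx0) hy2) (sq_nonneg k),
    mul_nonneg (mul_nonneg (mul_nonneg hx1 hyx) (sq_nonneg y)) hk3,
    mul_nonneg (mul_nonneg (mul_nonneg hx0 hx2) (sq_nonneg y)) hk3,
    mul_nonneg (mul_nonneg (mul_nonneg (mul_nonneg hx1 hx0) hx2) hyx) hk3,
    mul_nonneg (sq_nonneg y) hk3, h8]

lemma negside (x y w : ℝ) (hx : 2 ≤ x) (hxy : x ≤ y) (hw0 : 0 ≤ w) (hwx : w ≤ x) :
    (-(x-1)*(x-w)*(x^2+w^2))*y^3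
      + (-(x^2)*(x-1)*(x-2)*w - (2*x+1)*x*w^2 + (x^2-3*x+1)*w^3)*y^2
      + (2*x^2*(x-1)*w^2 - (4*x^2-x)*w^3)*y < 0 := by
  have hy : (0:ℝ) < y := by linarith
  have hx0 : (0:ℝ) < x := by linarith
  have hx1 : (0:ℝ) ≤ x - 1 := by linarith
  have hx2 : (0:ℝ) ≤ x - 2 := by linarith
  have hxw : (0:ℝ) ≤ x - w := by linarith
  have hA : -(x-1)*(x-w)*(x^2+w^2) ≤ 0 := by
    have : 0 ≤ (x-1)*(x-w)*(x^2+w^2) :=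
      mul_nonneg (mul_nonneg hx1 hxw) (by positivity)
    linarith
  have hB : -(x^2)*(x-1)*(x-2)*w - (2*x+1)*x*w^2 + (x^2-3*x+1)*w^3 ≤ 0 := by
    rcases le_or_gt (x^2-3*x+1) 0 with ha | ha
    · nlinarith [mul_nonneg hw0 (mul_nonneg (mul_nonneg (sq_nonneg x) hx1) hx2),
        mul_nonneg (sq_nonneg w) (by nlinarith : (0:ℝ) ≤ (2*x+1)*x),
        mul_nonneg (neg_nonneg.2 ha) (mul_nonneg (mul_nonneg hw0 hw0) hw0)]
    · by_contra hc
      push_neg at hc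
      nlinarith [mul_pos hx0 hc,
        mul_nonneg (mul_nonneg hw0 hxw) (mul_nonneg (mul_nonneg (sq_nonneg x) hx1) hx2),
        mul_nonneg (sq_nonneg w) (by nlinarith : (0:ℝ) ≤ x^2*(2*x+2)),
        mul_nonneg (mul_nonneg (mul_nonneg ha.le hx0.le) (sq_nonneg w)) hxw]
  have hAC : (-(x-1)*(x-w)*(x^2+w^2))*x^2 + (2*x^2*(x-1)*w^2 - (4*x^2-x)*w^3) < 0 := by
    rcases le_or_gt (2*w) x with hc | hc
    · have h4w : 4*w^2 ≤ x^2 := by nlinarith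
      nlinarith [mul_nonneg (mul_nonneg (mul_nonneg (sq_nonneg x) (sq_nonneg x)) hx1)
          (by linarith : (0:ℝ) ≤ x - 2*w),
        mul_nonneg (mul_nonneg (mul_nonneg hx1 hxw) (sq_nonneg x)) (sq_nonneg w),
        mul_nonneg (mul_nonneg (by linarith : (0:ℝ) ≤ 4*x-1) hx0.le)
          (mul_nonneg (mul_nonneg hw0 hw0) hw0),
        mul_nonneg (mul_nonneg (sq_nonneg x) hx1) (by nlinarith : (0:ℝ) ≤ x^3 - 4*w^2),
        sq_nonneg (x-2), sq_nonneg x,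
        mul_nonneg (mul_nonneg (mul_nonneg (sq_nonneg x) hx1) hx1) (by nlinarith : (0:ℝ) ≤ x^2*(x-1))]
    · nlinarith [mul_nonneg (mul_nonneg (mul_nonneg hx1 hxw) (sq_nonneg x)) (by positivity : (0:ℝ) ≤ x^2+w^2),
        mul_nonneg (mul_nonneg (by linarith : (0:ℝ) ≤ 4*x-1) hx0.le)
          (mul_nonneg (sq_nonneg w) (by linarith : (0:ℝ) ≤ 2*w - x)),
        mul_pos (mul_pos hx0 hx0) (mul_pos (by linarith : (0:ℝ) < w) (by linarith : (0:ℝ) < w)),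
        sq_nonneg (x*w - 4)]
  have hq : (-(x-1)*(x-w)*(x^2+w^2))*y^2
      + (-(x^2)*(x-1)*(x-2)*w - (2*x+1)*x*w^2 + (x^2-3*x+1)*w^3)*y
      + (2*x^2*(x-1)*w^2 - (4*x^2-x)*w^3) < 0 := by
    nlinarith [mul_nonneg (neg_nonneg.2 hA) (by nlinarith : (0:ℝ) ≤ y^2 - x^2),
      mul_nonneg (neg_nonneg.2 hB) (by linarith : (0:ℝ) ≤ y - x),
      mul_nonneg (neg_nonneg.2 hB) hx0.le, hAC]
  calc (-(x-1)*(x-w)*(x^2+w^2))*y^3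
      + (-(x^2)*(x-1)*(x-2)*w - (2*x+1)*x*w^2 + (x^2-3*x+1)*w^3)*y^2
      + (2*x^2*(x-1)*w^2 - (4*x^2-x)*w^3)*y
      = y * ((-(x-1)*(x-w)*(x^2+w^2))*y^2
      + (-(x^2)*(x-1)*(x-2)*w - (2*x+1)*x*w^2 + (x^2-3*x+1)*w^3)*y
      + (2*x^2*(x-1)*w^2 - (4*x^2-x)*w^3)) := by ring
    _ < 0 := mul_neg_of_pos_of_neg hy hq

/-- for every `k ∈ [-d1/d2, 1]`, `P_X(k) + Q_X(k) < 0`. -/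
theorem statement2 (d1 d2 : ℕ) (h1 : 2 ≤ d1) (h2 : d1 ≤ d2) :
    ∀ k ∈ Set.Icc (-(d1:ℝ)/(d2:ℝ)) 1, PX d1 d2 k + QX d1 d2 k < 0 := by
  intro k hk
  obtain ⟨hkl, hk1⟩ := hk
  set x : ℝ := (d1:ℝ) with hxdef
  set y : ℝ := (d2:ℝ) with hydef
  have hx : (2:ℝ) ≤ x := by rw [hxdef]; exact_mod_cast h1
  have hxy : x ≤ y := by rw [hxdef, hydef]; exact_mod_cast h2
  have hx0 : (0:ℝ) < x := by linarith
  have hy : (0:ℝ) < y := by linarith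
  have hn : (0:ℝ) < x + y - 1 := by linarith
  have hu : 0 ≤ x + y*k := by
    rw [div_le_iff₀ hy] at hkl
    linarith
  have hM : y^3*k^3 - y^2*k^3 - x*y*k^2 - x*y*k^3 + x*y^2*k^2 + 3*x*y^2*k^3 - x*y^3*k^3
      + 2*x^2*k - 2*x^2*k^2 + x^2*y*k - 2*x^2*y*k^2 + 4*x^2*y*k^3 - x^2*y^2*k^2 - x^2*y^2*k^3
      + x^3 - 3*x^3*k + 2*x^3*k^2 - x^3*y*k - x^4 + x^4*k < 0 := by
    rcases le_or_gt 0 k with hk0 | hk0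
    · exact posside x y k hx hxy hk0 hk1
    · have hw0 : 0 ≤ -(y*k) := by nlinarith
      have hwx : -(y*k) ≤ x := by linarith
      have hE := negside x y (-(y*k)) hx hxy hw0 hwx
      have hy3 : (0:ℝ) < y^3 := by positivity
      have hid : (y^3*k^3 - y^2*k^3 - x*y*k^2 - x*y*k^3 + x*y^2*k^2 + 3*x*y^2*k^3 - x*y^3*k^3
        + 2*x^2*k - 2*x^2*k^2 + x^2*y*k - 2*x^2*y*k^2 + 4*x^2*y*k^3 - x^2*y^2*k^2 - x^2*y^2*k^3
        + x^3 - 3*x^3*k + 2*x^3*k^2 - x^3*y*k - x^4 + x^4*k) * y^3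
        = (-(x-1)*(x-(-(y*k)))*(x^2+(-(y*k))^2))*y^3
          + (-(x^2)*(x-1)*(x-2)*(-(y*k)) - (2*x+1)*x*(-(y*k))^2 + (x^2-3*x+1)*(-(y*k))^3)*y^2
          + (2*x^2*(x-1)*(-(y*k))^2 - (4*x^2-x)*(-(y*k))^3)*y := by ring
      nlinarith [hE, hid, hy3, mul_pos hy3 hy3]
  have hkey : PX x y k + QX x y k
      = (y^3*k^3 - y^2*k^3 - x*y*k^2 - x*y*k^3 + x*y^2*k^2 + 3*x*y^2*k^3 - x*y^3*k^3
      + 2*x^2*k - 2*x^2*k^2 + x^2*y*k - 2*x^2*y*k^2 + 4*x^2*y*k^3 - x^2*y^2*k^2 - x^2*y^2*k^3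
      + x^3 - 3*x^3*k + 2*x^3*k^2 - x^3*y*k - x^4 + x^4*k) / (x^2*(x+y-1)) := by
    unfold PX QX
    field_simp
    ring
  rw [hkey]
  exact div_neg_of_neg_of_pos hM (by positivity)
end
end

section
/- Let A be a real number with 0 < A < d2*(d2-1)^2/(d1^2*(2*d1+d2)). Then for every k ∈ (0,1), the quadratic function l ↦ ζ(A,k,l) has exactly two real roots, both roots are positive, and the smaller root is strictly less than ν1(A,k). -/
noncomputable section

open PaperDefs

/-!
The quadratic `ζ(A,k,·)` has negative leading coefficient and is negative at `0`, so it suffices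
to find a point `v > 0` where it is positive: then it has one root in `(0, v)` and one in `(v, ∞)`.
The point `v = ν₁(A,k)` works, because `ζ(A,k,ν₁)` is, up to a positive factor,
`β₀·(d2(d2-1)² - d1²(2d1+d2)A) + (d2-2)(1-k)·(nonnegative)`, and `β₀ > 0`.
-/

theorem exists_pos_roots_of_neg_leading_of_pos_at {a b c v : ℝ} (ha : a < 0) (hc : c < 0)
    (hv : 0 < v) (hqv : 0 < a * v ^ 2 + b * v + c) :
    ∃ l1 l2 : ℝ, 0 < l1 ∧ l1 < l2 ∧
      a * l1 ^ 2 + b * l1 + c = 0 ∧ a * l2 ^ 2 + b * l2 + c = 0 ∧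
      (∀ l : ℝ, a * l ^ 2 + b * l + c = 0 → l = l1 ∨ l = l2) ∧ l1 < v := by
  have hdisc : 0 < discrim a b c := by
    have e : discrim a b c = (2 * a * v + b) ^ 2 - 4 * a * (a * v ^ 2 + b * v + c) := by
      unfold discrim; ring
    rw [e]
    nlinarith [sq_nonneg (2 * a * v + b), mul_pos (neg_pos.2 ha) hqv]
  set s := √(discrim a b c)
  have hs : s * s = b ^ 2 - 4 * a * c := Real.mul_self_sqrt hdisc.le
  have hs0 : 0 < s := Real.sqrt_pos.2 hdisc
  have ha0 : a ≠ 0 := ha.ne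
  set r1 := (-b + s) / (2 * a)
  set r2 := (-b - s) / (2 * a)
  have hfactor : ∀ l, a * l ^ 2 + b * l + c = a * ((l - r1) * (l - r2)) := by
    intro l
    simp only [r1, r2]
    field_simp
    linear_combination hs
  have hr12 : r1 < r2 := by
    have : r2 - r1 = s / -a := by simp only [r1, r2]; field_simp; ring
    linarith [div_pos hs0 (neg_pos.2 ha)]
  have hv_between : (v - r1) * (v - r2) < 0 := by
    rw [hfactor] at hqv
    exact neg_of_mul_pos_right hqv ha.le
  obtain ⟨hr1v, hvr2⟩ : r1 < v ∧ v < r2 := by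
    rcases mul_neg_iff.1 hv_between with ⟨h, h'⟩ | ⟨h, h'⟩
    · exact ⟨by linarith, by linarith⟩
    · linarith
  have hr1 : 0 < r1 := by
    have hprod : 0 < r1 * r2 := by nlinarith [hfactor 0]
    exact pos_of_mul_pos_left hprod (by linarith)
  refine ⟨r1, r2, hr1, hr12, by simp [hfactor], by simp [hfactor], fun l hl => ?_, hr1v⟩
  rw [hfactor] at hl
  rcases mul_eq_zero.1 ((mul_eq_zero.1 hl).resolve_left ha0) with h | h
  · exact Or.inl (sub_eq_zero.1 h)
  · exact Or.inr (sub_eq_zero.1 h)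

section

variable {x y A k : ℝ}

theorem zeta_leading_coeff_neg (hx : 1 ≤ x) (hy : 0 < y) (hA : 0 < A) (hk : 0 < k) :
    -((x + y * k) * (x + y * k - 1) * (2 * x + y * k)) / y * A < 0 := by
  have hyk : 0 < y * k := mul_pos hy hk
  have : 0 < (x + y * k) * (x + y * k - 1) * (2 * x + y * k) := by
    apply mul_pos (mul_pos _ _) _ <;> linarith
  exact mul_neg_of_neg_of_pos (div_neg_of_neg_of_pos (by linarith) hy) hA

theorem zeta_const_coeff_neg (hx : 1 < x) (hy : 0 ≤ y) (hk0 : 0 < k) (hk1 : k < 1) :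
    -(k * (x - 1) * (x + y * k) * (x + y * k + 1 - 2 * k)) < 0 := by
  have hyk : 0 ≤ y * k := mul_nonneg hy hk0.le
  have : 0 < k * (x - 1) * (x + y * k) * (x + y * k + 1 - 2 * k) := by
    apply mul_pos (mul_pos (mul_pos hk0 _) _) _ <;> linarith
  linarith

theorem nu1_pos (hx : 0 < x) (hy : 1 < y) (hA : 0 < A) (hk : 0 < k) : 0 < nu1 x y A k := by
  unfold nu1
  have : 0 < y - 1 := sub_pos.2 hy
  positivity

theorem beta0_pos (hx : 1 ≤ x) (hy : 2 ≤ y) (hk0 : 0 < k) (hk1 : k < 1) : 0 < beta0 x y k := by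
  have e : beta0 x y k = y * k * (1 - k)
      + (x - 1) * (y * (y - 2) * k ^ 2 + (2 * x * (y - 1) + y) * k + x * (x + 1)) := by
    unfold beta0; ring
  have : 0 < 1 - k := sub_pos.2 hk1
  have : 0 ≤ x - 1 := sub_nonneg.2 hx
  have : 0 ≤ y - 2 := sub_nonneg.2 hy
  have : 0 < y - 1 := by linarith
  rw [e]
  positivity

theorem zeta_nu1_mul_eq (hx : 0 < x) (hy : 1 < y) (hA : 0 < A) (hk : 0 < k) :
    zeta x y A k (nu1 x y A k) * (x ^ 2 * A * (2 * x + y * k)) =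
      k ^ 2 * (beta0 x y k * (y * (y - 1) ^ 2 - x ^ 2 * (2 * x + y) * A)
        + x ^ 2 * A * (1 - k) * (y - 2) * (2 * x * (x - 1) + y * (2 * x - 1) * k)) := by
  have hy0 : 0 < y := by linarith
  have hy1 : y - 1 ≠ 0 := by linarith
  unfold zeta nu1 beta0
  field_simp
  ring

theorem zeta_nu1_pos (hx : 1 ≤ x) (hy : 2 ≤ y) (hA : 0 < A)
    (hAlt : x ^ 2 * (2 * x + y) * A < y * (y - 1) ^ 2) (hk0 : 0 < k) (hk1 : k < 1) :
    0 < zeta x y A k (nu1 x y A k) := by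
  have hx0 : 0 < x := by linarith
  have hfactor : 0 < x ^ 2 * A * (2 * x + y * k) := by positivity
  have hβ := beta0_pos hx hy hk0 hk1
  have : 0 < y * (y - 1) ^ 2 - x ^ 2 * (2 * x + y) * A := sub_pos.2 hAlt
  have : 0 < 1 - k := sub_pos.2 hk1
  have : 0 ≤ y - 2 := sub_nonneg.2 hy
  have : 0 ≤ x - 1 := sub_nonneg.2 hx
  have : 0 ≤ 2 * x - 1 := by linarith
  have hprod : 0 < zeta x y A k (nu1 x y A k) * (x ^ 2 * A * (2 * x + y * k)) := by
    rw [zeta_nu1_mul_eq hx0 (by linarith) hA hk0]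
    positivity
  exact pos_of_mul_pos_left hprod hfactor.le

end

/-- if `0 < A < d2(d2-1)²/(d1²(2d1+d2))`, then for every `k ∈ (0,1)` the
quadratic `l ↦ ζ(A,k,l)` has exactly two real roots, both positive, and the smaller
root is strictly less than `ν₁(A,k)`. -/
theorem statement3 (d1 d2 : ℕ) (h1 : 2 ≤ d1) (h2 : d1 ≤ d2) (A : ℝ)
    (hA0 : 0 < A) (hA : A < (d2:ℝ)*((d2:ℝ)-1)^2/((d1:ℝ)^2*(2*(d1:ℝ)+(d2:ℝ)))) :
    ∀ k ∈ Set.Ioo (0:ℝ) 1, ∃ l1 l2 : ℝ,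
      0 < l1 ∧ l1 < l2 ∧
      zeta d1 d2 A k l1 = 0 ∧ zeta d1 d2 A k l2 = 0 ∧
      (∀ l : ℝ, zeta d1 d2 A k l = 0 → l = l1 ∨ l = l2) ∧
      l1 < nu1 d1 d2 A k := by
  rintro k ⟨hk0, hk1⟩
  have hx : (2 : ℝ) ≤ d1 := by exact_mod_cast h1
  have hy : (2 : ℝ) ≤ d2 := by exact_mod_cast h1.trans h2
  have hAlt : (d1 : ℝ) ^ 2 * (2 * d1 + d2) * A < d2 * (d2 - 1) ^ 2 := by
    rwa [lt_div_iff₀ (by positivity), mul_comm] at hA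
  exact exists_pos_roots_of_neg_leading_of_pos_at
    (zeta_leading_coeff_neg (by linarith) (by linarith) hA0 hk0)
    (zeta_const_coeff_neg (by linarith) (by linarith) hk0 hk1)
    (nu1_pos (by linarith) (by linarith) hA0 hk0)
    (zeta_nu1_pos (by linarith) hy hA0 hAlt hk0 hk1)
end
end

section
/- Let A > 0 be a real number such that d1^2*(2*d1 + d2*k')*ω0(k')*A < d2*(d2-1)^2*β2(k') for every k' ∈ [0,1]. Then ω(A, k, ν1(A,k)) > 0 for every k ∈ (0,1). -/
noncomputable section

open PaperDefs

/-- if `d1²(2d1+d2 k')ω₀(k') A < d2(d2-1)² β₂(k')` for every `k' ∈ [0,1]`,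
then `ω(A, k, ν₁(A,k)) > 0` for every `k ∈ (0,1)`. -/
theorem statement4 (d1 d2 : ℕ) (h1 : 2 ≤ d1) (h2 : d1 ≤ d2) (A : ℝ) (hA0 : 0 < A)
    (hA : ∀ k' ∈ Set.Icc (0:ℝ) 1,
      (d1:ℝ)^2*(2*(d1:ℝ)+(d2:ℝ)*k')*omega0 d1 d2 k'*A < (d2:ℝ)*((d2:ℝ)-1)^2*beta2 d1 d2 k') :
    ∀ k ∈ Set.Ioo (0:ℝ) 1, 0 < omega d1 d2 A k (nu1 d1 d2 A k) := by
  intro k hk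
  obtain ⟨hk0, hk1⟩ := hk
  have hd1 : (2:ℝ) ≤ (d1:ℝ) := by exact_mod_cast h1
  have hd2 : (d1:ℝ) ≤ (d2:ℝ) := by exact_mod_cast h2
  have hD1 : (0:ℝ) < d1 := by linarith
  have hD2 : (0:ℝ) < d2 := by linarith
  have hs : (0:ℝ) < 2*(d1:ℝ) + (d2:ℝ)*k := by nlinarith
  have hn : (0:ℝ) < (d1:ℝ) + (d2:ℝ) - 1 := by linarith
  have key := hA k ⟨le_of_lt hk0, le_of_lt hk1⟩
  have heq : omega d1 d2 A k (nu1 d1 d2 A k)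
      = (k^2*((d1:ℝ)-1)/((d1:ℝ)^4*((d1:ℝ)+(d2:ℝ)-1)*A*(2*(d1:ℝ)+(d2:ℝ)*k)))
        * ((d2:ℝ)*((d2:ℝ)-1)^2*beta2 d1 d2 k
            - (d1:ℝ)^2*(2*(d1:ℝ)+(d2:ℝ)*k)*omega0 d1 d2 k*A) := by
    unfold omega nu1 omega2 omega1 omega0 beta2
    field_simp
    ring
  rw [heq]
  apply mul_pos
  · apply div_pos
    · nlinarith
    · positivity
  · linarith
end
end

section
/- Let A > 0 be a real number with 4*(d1-1)*(2*d1+d2)*A < d2*(d2-1)^2, and let μ1 be the larger of the two real roots of the quadratic μ ↦ ((2*d1+d2)/d2)*A*μ^2 - (d2-1)*μ + (d1-1). Then for every k ∈ (-d1/d2, 0) with P_X(k) ≤ 0 and every l ∈ [0, μ1], one has P_Y(A,k,l) < 0. -/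
noncomputable section

open PaperDefs

set_option maxHeartbeats 2000000 in
/-- with `0 < A` and `4(d1-1)(2d1+d2)A < d2(d2-1)²`, if `μ₁` is the larger
of the two real roots of `μ ↦ ((2d1+d2)/d2) A μ² - (d2-1) μ + (d1-1)`, then for every
`k ∈ (-d1/d2, 0)` with `P_X(k) ≤ 0` and every `l ∈ [0, μ₁]`, one has `P_Y(A,k,l) < 0`. -/
theorem statement5 (d1 d2 : ℕ) (h1 : 2 ≤ d1) (h2 : d1 ≤ d2) (A : ℝ) (hA0 : 0 < A)
    (hA : 4*((d1:ℝ)-1)*(2*(d1:ℝ)+(d2:ℝ))*A < (d2:ℝ)*((d2:ℝ)-1)^2)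
    (mu1 : ℝ)
    (hroot : ((2*(d1:ℝ)+(d2:ℝ))/(d2:ℝ))*A*mu1^2 - ((d2:ℝ)-1)*mu1 + ((d1:ℝ)-1) = 0)
    (hmax : ∀ mu : ℝ,
      ((2*(d1:ℝ)+(d2:ℝ))/(d2:ℝ))*A*mu^2 - ((d2:ℝ)-1)*mu + ((d1:ℝ)-1) = 0 → mu ≤ mu1) :
    ∀ k ∈ Set.Ioo (-(d1:ℝ)/(d2:ℝ)) 0, PX d1 d2 k ≤ 0 →
      ∀ l ∈ Set.Icc (0:ℝ) mu1, PY d1 d2 A k l < 0 := by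
  intro k hk hPX l hl
  obtain ⟨hk1, hk2⟩ := hk
  obtain ⟨hl0, hl1⟩ := hl
  have ha : (2:ℝ) ≤ (d1:ℝ) := by exact_mod_cast h1
  have hab : (d1:ℝ) ≤ (d2:ℝ) := by exact_mod_cast h2
  have hb2 : (2:ℝ) ≤ (d2:ℝ) := le_trans ha hab
  have ha0 : (0:ℝ) < (d1:ℝ) := by linarith
  have hb0 : (0:ℝ) < (d2:ℝ) := by linarith
  have hn1 : (0:ℝ) < (d1:ℝ) + (d2:ℝ) - 1 := by linarith
  have hk1' : -(d1:ℝ) < (d2:ℝ)*k := by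
    rw [div_lt_iff₀ hb0] at hk1
    nlinarith
  have hroot' : (2*(d1:ℝ)+(d2:ℝ))*A*mu1^2 = (d2:ℝ)*(((d2:ℝ)-1)*mu1 - ((d1:ℝ)-1)) := by
    have hb0' : (d2:ℝ) ≠ 0 := ne_of_gt hb0
    field_simp at hroot
    nlinarith [hroot]
  have hmu0 : 0 < mu1 := by
    nlinarith [hroot', mul_nonneg (mul_nonneg (by linarith : (0:ℝ) ≤ 2*(d1:ℝ)+(d2:ℝ)) hA0.le) (sq_nonneg mu1),
      mul_pos hb0 (by linarith : (0:ℝ) < (d1:ℝ)-1), mul_pos hb0 (by linarith : (0:ℝ) < (d2:ℝ)-1)]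
  have hAmu : (2*(d1:ℝ)+(d2:ℝ))*A*mu1 < (d2:ℝ)*((d2:ℝ)-1) := by
    have h2' : (2*(d1:ℝ)+(d2:ℝ))*A*mu1*mu1 < (d2:ℝ)*((d2:ℝ)-1)*mu1 := by
      nlinarith [hroot', mul_pos hb0 (by linarith : (0:ℝ) < (d1:ℝ)-1)]
    exact lt_of_mul_lt_mul_right h2' hmu0.le
  have hq : (d2:ℝ)*((d1:ℝ)*(d2:ℝ) - 2*(d1:ℝ) - (d2:ℝ) + 1)*k^2 + 2*((d2:ℝ)-1)*((d1:ℝ)-1)*(d1:ℝ)*k + (d1:ℝ)^2*((d1:ℝ)-1) ≤ 0 := by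
    by_contra hq'
    push_neg at hq'
    have h1k : (0:ℝ) < 1 - k := by linarith
    have hpos : 0 < PX d1 d2 k := by
      rw [PX]
      exact div_pos (mul_pos hq' h1k) (mul_pos ha0 hn1)
    linarith
  have hkey : (d1:ℝ) + (d2:ℝ)*k < 1 := by
    by_contra hy
    push_neg at hy
    have hy0 : (0:ℝ) ≤ (d2:ℝ)*k + (d1:ℝ) - 1 := by linarith
    have hy1 : (d2:ℝ)*k + (d1:ℝ) - 1 ≤ (d1:ℝ) - 1 := by nlinarith
    rcases le_or_gt 0 ((d1:ℝ)*(d2:ℝ) - 2*(d1:ℝ) - (d2:ℝ) + 1) with hlam | hlam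
    · nlinarith [mul_nonneg hlam (sq_nonneg ((d2:ℝ)*k + (d1:ℝ) - 1)),
        mul_nonneg hy0 (by nlinarith : (0:ℝ) ≤ 2*((d1:ℝ)-1)*((d1:ℝ)+(d2:ℝ)-1)),
        mul_pos (by linarith : (0:ℝ) < (d1:ℝ)-1) hn1]
    · nlinarith [mul_nonneg (mul_nonneg hy0 (by linarith : (0:ℝ) ≤ (d1:ℝ) - 1 - ((d2:ℝ)*k + (d1:ℝ) - 1))) (by linarith : (0:ℝ) ≤ -((d1:ℝ)*(d2:ℝ) - 2*(d1:ℝ) - (d2:ℝ) + 1)),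
        mul_nonneg hy0 (by nlinarith : (0:ℝ) ≤ ((d1:ℝ)-1)*((d1:ℝ)*(d2:ℝ)+(d2:ℝ)-1)),
        mul_pos (by linarith : (0:ℝ) < (d1:ℝ)-1) hn1]
  have hdk : (0:ℝ) < (d1:ℝ) + (d2:ℝ)*k := by linarith
  have hdkk : (0:ℝ) < (d1:ℝ) + (d2:ℝ)*k - k := by linarith
  have hc0 : (0:ℝ) < (d2:ℝ)*((d1:ℝ)-1)*((d1:ℝ)+(d2:ℝ)*k-k) :=
    mul_pos (mul_pos hb0 (by linarith)) hdkk
  have hnum : (0:ℝ) < ((d1:ℝ)*(2*(d1:ℝ)+(d2:ℝ)-2) + (d2:ℝ)*(2*(d1:ℝ)+(d2:ℝ)-1)*k)*A*l^2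
      - (d2:ℝ)*((d2:ℝ)-1)*((d1:ℝ)+(d2:ℝ)*k-1)*l + (d2:ℝ)*((d1:ℝ)-1)*((d1:ℝ)+(d2:ℝ)*k-k) := by
    have hc1l : (0:ℝ) ≤ ((d2:ℝ)*((d2:ℝ)-1)*(1-((d1:ℝ)+(d2:ℝ)*k)))*l :=
      mul_nonneg (mul_nonneg (mul_nonneg hb0.le (by linarith)) (by linarith)) hl0
    rcases le_or_gt 0 ((d1:ℝ)*(2*(d1:ℝ)+(d2:ℝ)-2) + (d2:ℝ)*(2*(d1:ℝ)+(d2:ℝ)-1)*k) with hc2 | hc2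
    · nlinarith [mul_nonneg (mul_nonneg hc2 hA0.le) (sq_nonneg l), hc1l, hc0]
    · have t1 : (0:ℝ) ≤ (-(((d1:ℝ)*(2*(d1:ℝ)+(d2:ℝ)-2) + (d2:ℝ)*(2*(d1:ℝ)+(d2:ℝ)-1)*k)*A)) * (mu1*l - l^2) := by
        apply mul_nonneg
        · nlinarith
        · nlinarith [mul_nonneg hl0 (by linarith : (0:ℝ) ≤ mu1 - l)]
      have hco : (0:ℝ) < (2*(d1:ℝ)+(d2:ℝ))*((((d1:ℝ)*(2*(d1:ℝ)+(d2:ℝ)-2) + (d2:ℝ)*(2*(d1:ℝ)+(d2:ℝ)-1)*k))*A*mu1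
          - (d2:ℝ)*((d2:ℝ)-1)*((d1:ℝ)+(d2:ℝ)*k-1)) := by
        have hm := mul_lt_mul_of_neg_left hAmu hc2
        nlinarith [hm, mul_pos (mul_pos hb0 (by linarith : (0:ℝ) < (d2:ℝ)-1)) (mul_pos (by linarith : (0:ℝ) < 1-k) hb0)]
      have hco' : (0:ℝ) ≤ l * ((((d1:ℝ)*(2*(d1:ℝ)+(d2:ℝ)-2) + (d2:ℝ)*(2*(d1:ℝ)+(d2:ℝ)-1)*k))*A*mu1
          - (d2:ℝ)*((d2:ℝ)-1)*((d1:ℝ)+(d2:ℝ)*k-1)) := by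
        apply mul_nonneg hl0
        nlinarith [hco]
      nlinarith [t1, hco', hc0]
  have hexp : PY d1 d2 A k l = -((((d1:ℝ)*(2*(d1:ℝ)+(d2:ℝ)-2) + (d2:ℝ)*(2*(d1:ℝ)+(d2:ℝ)-1)*k)*A*l^2
      - (d2:ℝ)*((d2:ℝ)-1)*((d1:ℝ)+(d2:ℝ)*k-1)*l + (d2:ℝ)*((d1:ℝ)-1)*((d1:ℝ)+(d2:ℝ)*k-k))
      / ((d2:ℝ)*((d1:ℝ)+(d2:ℝ)-1))) := by
    rw [PY]
    have hb0' : (d2:ℝ) ≠ 0 := ne_of_gt hb0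
    have hn1' : (d1:ℝ)+(d2:ℝ)-1 ≠ 0 := ne_of_gt hn1
    field_simp
    ring
  rw [hexp]
  have hden : (0:ℝ) < (d2:ℝ)*((d1:ℝ)+(d2:ℝ)-1) := mul_pos hb0 hn1
  have := div_pos hnum hden
  linarith
end
end

section
/- For every real A > 0 and every k ∈ (-d1/d2, 0] with P_X(k) > 0, there is no real number l such that ω(A,k,l) = 0 and P_Y(A,k,l) = 0. -/
noncomputable section

open PaperDefs

/-!
Clearing denominators, `ω = 0` and `P_Y = 0` become two quadratics in `l`, so a common root
forces their resultant to vanish. That resultant factors as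
`A (d1 - 1) d2² (numerator of P_X)² (A ρ₁ - ρ₀)`, and for `k ∈ (-d1/d2, 0]` every factor is
nonzero: `ρ₁ ≥ 0`, while `ρ₀ < 0` for `k < 0` and `ρ₁ > 0` at `k = 0`.
-/

def PXnum (d1 d2 k : ℝ) : ℝ :=
  (d2*(d1*d2 - 2*d1 - d2 + 1)*k^2 + 2*(d2-1)*(d1-1)*d1*k + d1^2*(d1-1))*(1-k)

/-- The Sylvester resultant of `a₂x² + a₁x + a₀` and `b₂x² + b₁x + b₀`. -/
def quadResultant {R : Type*} [CommRing R] (a₂ a₁ a₀ b₂ b₁ b₀ : R) : R :=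
  (a₂*b₀ - a₀*b₂)^2 - (a₂*b₁ - a₁*b₂)*(a₁*b₀ - a₀*b₁)

theorem quadResultant_eq_zero_of_common_root {R : Type*} [CommRing R] {a₂ a₁ a₀ b₂ b₁ b₀ x : R}
    (ha : a₂*x^2 + a₁*x + a₀ = 0) (hb : b₂*x^2 + b₁*x + b₀ = 0) :
    quadResultant a₂ a₁ a₀ b₂ b₁ b₀ = 0 := by
  unfold quadResultant
  linear_combination
    ((a₂*b₁ - a₁*b₂)*b₁ - ((a₂*b₀ - a₀*b₂) - (a₂*b₁ - a₁*b₂)*x)*b₂)*ha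
      + (((a₂*b₀ - a₀*b₂) - (a₂*b₁ - a₁*b₂)*x)*a₂ - (a₂*b₁ - a₁*b₂)*a₁)*hb

section

variable {d1 d2 A k l : ℝ}

theorem resultant_eq_zero_of_omega_eq_zero_of_PY_eq_zero (hd1 : d1 ≠ 0) (hd2 : d2 ≠ 0) (hn : d1 + d2 - 1 ≠ 0)
    (hω : omega d1 d2 A k l = 0) (hY : PY d1 d2 A k l = 0) :
    A*(d1-1)*d2^2*PXnum d1 d2 k^2*(A*rho1 d1 d2 k - rho0 d1 d2 k) = 0 := by
  have hω' : ((2*d1 + d2*k)*omega2 d1 d2 k*A)*l^2 + (d2*(d2-1)*k*omega1 d1 d2 k)*l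
      + (-(d2*(d1-1)*k^2*omega0 d1 d2 k)) = 0 := by
    unfold omega at hω
    field_simp at hω
    linear_combination hω
  have hY' : (-((d1*(2*d1+d2-2) + d2*(2*d1+d2-1)*k)*A))*l^2 + (d2*(d2-1)*(d1+d2*k-1))*l
      + (-(d2*(d1-1)*(d1+d2*k-k))) = 0 := by
    unfold PY at hY
    field_simp at hY
    linear_combination hY
  have hres := quadResultant_eq_zero_of_common_root hω' hY'
  unfold quadResultant omega2 omega1 omega0 at hres
  unfold PXnum rho1 rho0
  linear_combination hres

theorem rho0_lt_mul_rho1 (hA : 0 < A) (hd1 : 1 < d1) (hd2 : 1 < d2) (hk : k ≤ 0)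
    (hu : 0 < d1 + d2*k) : rho0 d1 d2 k < A * rho1 d1 d2 k := by
  rcases hk.lt_or_eq with hk | rfl
  · have hρ₁ : 0 ≤ rho1 d1 d2 k := by
      unfold rho1
      have : 0 ≤ d1 - 1 := by linarith
      positivity
    have hρ₀ : rho0 d1 d2 k < 0 := by
      have h₁ : 0 < (d2-1)^2 := by nlinarith
      have h₂ : 0 < 4*d1 + 3*d2*k := by linarith
      have h₃ : 0 < 4*(d1-1)*(d1 + d2*k)^2 + d2^2*k^2 := by nlinarith [sq_nonneg (d2*k)]
      have h₄ : k*d2 < 0 := mul_neg_of_neg_of_pos hk (by linarith)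
      unfold rho0
      have := mul_neg_of_neg_of_pos (mul_neg_of_neg_of_pos (mul_neg_of_pos_of_neg h₁ h₄) h₂) h₃
      linarith
    linarith [mul_nonneg hA.le hρ₁]
  · have hρ₁ : 0 < rho1 d1 d2 0 := by
      unfold rho1
      have : 0 < d1 - 1 := by linarith
      have : 0 < d1 := by linarith
      positivity
    simpa [rho0] using mul_pos hA hρ₁

end

/-- for every `A > 0` and every `k ∈ (-d1/d2, 0]` with `P_X(k) > 0`,
there is no real `l` with `ω(A,k,l) = 0` and `P_Y(A,k,l) = 0`. -/
theorem statement6 (d1 d2 : ℕ) (h1 : 2 ≤ d1) (h2 : d1 ≤ d2) (A : ℝ) (hA : 0 < A) :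
    ∀ k ∈ Set.Ioc (-(d1:ℝ)/(d2:ℝ)) 0, 0 < PX d1 d2 k →
      ¬ ∃ l : ℝ, omega d1 d2 A k l = 0 ∧ PY d1 d2 A k l = 0 := by
  rintro k ⟨hk₁, hk₂⟩ hPX ⟨l, hω, hY⟩
  have hd1 : (2:ℝ) ≤ d1 := by exact_mod_cast h1
  have hd2 : (2:ℝ) ≤ d2 := by exact_mod_cast h1.trans h2
  have hu : 0 < (d1:ℝ) + d2*k := by
    have := (div_lt_iff₀ (by linarith : (0:ℝ) < d2)).mp hk₁
    linarith
  have hnum : PXnum d1 d2 k ≠ 0 := (div_ne_zero_iff.mp hPX.ne').1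
  have hres := resultant_eq_zero_of_omega_eq_zero_of_PY_eq_zero
    (by linarith) (by linarith) (by linarith) hω hY
  have hgap := rho0_lt_mul_rho1 hA (by linarith) (by linarith) hk₂ hu
  have hd1' : (d1:ℝ) - 1 ≠ 0 := by linarith
  have hd2' : (d2:ℝ) ^ 2 ≠ 0 := by positivity
  exact mul_ne_zero (mul_ne_zero (mul_ne_zero (mul_ne_zero hA.ne' hd1') hd2')
    (pow_ne_zero 2 hnum)) (sub_pos.mpr hgap).ne' hres
end
end

section
/- For all natural numbers d1, d2 with 2 ≤ d1 ≤ d2, one has ω̃2(κ_*) > 0, where κ_* = (-2*d1 + 5*d2 - sqrt((2*d1 + d2)^2 + 12*d2))/(4*d2 - 4*d1 - 2). -/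
noncomputable section

open PaperDefs

private theorem Npos_aux (a b k : ℝ) (ha : 2 ≤ a) (hab : a ≤ b) (hk0 : 0 < k) (hk1 : k < 1) :
    0 < k^3 + (a-1)*(1-k)*((-2*a + b - 2)*k^2 + (2*a - 3*b)*k + 2*b) := by
  have hu : (0:ℝ) < 1 - k := by linarith
  have he : (1:ℝ) ≤ a - 1 := by linarith
  have hba : 0 ≤ b - a := by linarith
  set e := a - 1 with hedef
  set u := 1 - k with hudef
  have hG : 0 < e^2*u^2*(k+2) + e*(u^2*(k+2) - 2*u*k^2) + k^3 := by
    rcases le_or_gt (2*k^2) (u*(k+2)) with h | h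
    · have h1 : 0 ≤ e*(u^2*(k+2) - 2*u*k^2) := by
        apply mul_nonneg (by linarith)
        have : u^2*(k+2) - 2*u*k^2 = u*(u*(k+2) - 2*k^2) := by ring
        rw [this]; exact mul_nonneg hu.le (by linarith)
      have h2 : 0 < e^2*u^2*(k+2) := by positivity
      have h3 : 0 < k^3 := by positivity
      linarith
    · have ht0 : 0 ≤ 2*k^2 - u*(k+2) := by linarith
      have ht2 : (2*k^2 - u*(k+2))^2 < 4*k^3*(k+2) := by
        nlinarith [pow_pos hk0 3, mul_pos hu (by linarith : (0:ℝ) < k+2), sq_nonneg k]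
      have key : 0 < 4*u^2*(k+2)*(e^2*u^2*(k+2) + e*(u^2*(k+2) - 2*u*k^2) + k^3) := by
        nlinarith [sq_nonneg (2*e*u^2*(k+2) + u*(u*(k+2) - 2*k^2)),
          mul_pos (mul_pos hu hu) (by linarith : (0:ℝ) < 4*k^3*(k+2) - (2*k^2 - u*(k+2))^2)]
      have hpos : (0:ℝ) < 4*u^2*(k+2) := by positivity
      by_contra hng
      push_neg at hng
      nlinarith [key, hpos, hng]
  have hNG : k^3 + e*u*((-2*a + b - 2)*k^2 + (2*a - 3*b)*k + 2*b)
      = (e^2*u^2*(k+2) + e*(u^2*(k+2) - 2*u*k^2) + k^3) + (b-a)*e*u^2*(2-k) := by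
    rw [hedef, hudef]; ring
  have hextra : 0 ≤ (b-a)*e*u^2*(2-k) :=
    mul_nonneg (mul_nonneg (mul_nonneg hba (by linarith)) (sq_nonneg _)) (by linarith)
  linarith



/-- `ω̃₂(κ_*) > 0` where
`κ_* = (-2d1 + 5d2 - √((2d1+d2)² + 12 d2))/(4d2 - 4d1 - 2)`. -/
theorem statement14 (d1 d2 : ℕ) (h1 : 2 ≤ d1) (h2 : d1 ≤ d2) :
    0 < omegaTilde2 d1 d2
      ((-2*(d1:ℝ) + 5*(d2:ℝ) - Real.sqrt ((2*(d1:ℝ) + (d2:ℝ))^2 + 12*(d2:ℝ)))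
        /(4*(d2:ℝ) - 4*(d1:ℝ) - 2)) := by
  have ha : (2:ℝ) ≤ (d1:ℝ) := by exact_mod_cast h1
  have hab : (d1:ℝ) ≤ (d2:ℝ) := by exact_mod_cast h2
  set a := (d1:ℝ) with hadef
  set b := (d2:ℝ) with hbdef
  have hnn : (0:ℝ) ≤ (2*a + b)^2 + 12*b := by positivity
  set s := Real.sqrt ((2*a + b)^2 + 12*b) with hsdef
  have hs0 : 0 ≤ s := Real.sqrt_nonneg _
  have hs : s^2 = (2*a + b)^2 + 12*b := Real.sq_sqrt hnn
  set k := (-2*a + 5*b - s)/(4*b - 4*a - 2) with hkdef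
  have hk : 0 < k ∧ k < 1 := by
    rcases eq_or_lt_of_le h2 with heq | hlt
    · have hba : a = b := by rw [hadef, hbdef, heq]
      have hsl : s < 3*b + 2 := by nlinarith [hs, hs0, ha, hab]
      have hsg : 3*b < s := by nlinarith [hs, hs0, ha, hab]
      have hD : 4*b - 4*a - 2 = -2 := by rw [hba]; ring
      constructor
      · rw [hkdef, hD, hba]
        rw [div_pos_iff]
        right; constructor <;> nlinarith
      · rw [hkdef, hD, hba]
        rw [div_lt_iff_of_neg (by norm_num)]
        nlinarith
    · have hba : a + 1 ≤ b := by
        have : d1 + 1 ≤ d2 := hlt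
        rw [hadef, hbdef]; exact_mod_cast this
      have hD : 0 < 4*b - 4*a - 2 := by linarith
      have hsl : s < 5*b - 2*a := by nlinarith [hs, hs0, ha]
      have hsg : 2*a + b + 2 < s := by nlinarith [hs, hs0, ha]
      constructor
      · rw [hkdef]; apply div_pos (by linarith) hD
      · rw [hkdef, div_lt_one hD]; linarith
  obtain ⟨hk0, hk1⟩ := hk
  have hk3 : (0:ℝ) < k^3 := by positivity
  have hrw : omegaTilde2 a b k
      = (k^3 + (a-1)*(1-k)*((-2*a + b - 2)*k^2 + (2*a - 3*b)*k + 2*b))/k^3 := by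
    unfold omegaTilde2
    field_simp
  rw [hrw]
  exact div_pos (Npos_aux a b k ha hab hk0 hk1) hk3
end
end

section
/- For all natural numbers d1, d2 with 2 ≤ d1 ≤ d2 and every real k ∈ [0,1], one has β0(k) > 0 and β1(k) > 0. -/
noncomputable section

open PaperDefs

/-- for every `k ∈ [0,1]`, `β₀(k) > 0` and `β₁(k) > 0`. -/
theorem statement15 (d1 d2 : ℕ) (h1 : 2 ≤ d1) (h2 : d1 ≤ d2) :
    ∀ k ∈ Set.Icc (0:ℝ) 1, 0 < beta0 d1 d2 k ∧ 0 < beta1 d1 d2 k := by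
  intro k hk
  obtain ⟨hk0, hk1⟩ := hk
  have ha : (2:ℝ) ≤ d1 := by exact_mod_cast h1
  have hb : (d1:ℝ) ≤ d2 := by exact_mod_cast h2
  obtain ⟨x, hx0, hxe⟩ : ∃ x : ℝ, 0 ≤ x ∧ (d1:ℝ) = x + 2 :=
    ⟨(d1:ℝ) - 2, by linarith, by ring⟩
  obtain ⟨y, hy0, hye⟩ : ∃ y : ℝ, 0 ≤ y ∧ (d2:ℝ) = x + y + 2 :=
    ⟨(d2:ℝ) - (d1:ℝ), by linarith, by linarith⟩
  have hkk : (0:ℝ) ≤ k*(1-k) := mul_nonneg hk0 (by linarith)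
  constructor
  · have hC : (0:ℝ) < 6 + 11*x + 6*x^2 + 1*x^3 := by positivity
    have hM : (0:ℝ) ≤ 20 + 6*y + 36*x + 7*x*y + 21*x^2 + 2*x^2*y + 4*x^3 := by positivity
    have hS : (0:ℝ) < 12 + 7*y + 1*y^2 + 26*x + 11*x*y + 1*x*y^2 + 18*x^2 + 4*x^2*y + 4*x^3 := by positivity
    have hq : beta0 d1 d2 k =
        (6 + 11*x + 6*x^2 + 1*x^3)*(1-k)^2 + (20 + 6*y + 36*x + 7*x*y + 21*x^2 + 2*x^2*y + 4*x^3)*(k*(1-k)) + (12 + 7*y + 1*y^2 + 26*x + 11*x*y + 1*x*y^2 + 18*x^2 + 4*x^2*y + 4*x^3)*k^2 := by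
      unfold beta0; rw [hxe, hye]; ring
    rw [hq]
    rcases le_or_gt k (1/2) with hc | hc
    · have p1 : (0:ℝ) < (6 + 11*x + 6*x^2 + 1*x^3)*(1-k)^2 := mul_pos hC (pow_pos (by linarith) 2)
      have p2 : (0:ℝ) ≤ (20 + 6*y + 36*x + 7*x*y + 21*x^2 + 2*x^2*y + 4*x^3)*(k*(1-k)) := mul_nonneg hM hkk
      have p3 : (0:ℝ) ≤ (12 + 7*y + 1*y^2 + 26*x + 11*x*y + 1*x*y^2 + 18*x^2 + 4*x^2*y + 4*x^3)*k^2 := mul_nonneg hS.le (sq_nonneg k)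
      linarith
    · have p1 : (0:ℝ) ≤ (6 + 11*x + 6*x^2 + 1*x^3)*(1-k)^2 := mul_nonneg hC.le (sq_nonneg (1-k))
      have p2 : (0:ℝ) ≤ (20 + 6*y + 36*x + 7*x*y + 21*x^2 + 2*x^2*y + 4*x^3)*(k*(1-k)) := mul_nonneg hM hkk
      have p3 : (0:ℝ) < (12 + 7*y + 1*y^2 + 26*x + 11*x*y + 1*x*y^2 + 18*x^2 + 4*x^2*y + 4*x^3)*k^2 := mul_pos hS (pow_pos (by linarith) 2)
      linarith
  · have hC : (0:ℝ) < 36 + 2*y + 80*x + 5*x*y + 63*x^2 + 4*x^2*y + 22*x^3 + 1*x^3*y + 3*x^4 := by positivity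
    have hM : (0:ℝ) ≤ 120 + 46*y + 3*y^2 + 266*x + 80*x*y + 5*x*y^2 + 221*x^2 + 48*x^2*y + 2*x^2*y^2 + 83*x^3 + 10*x^3*y + 12*x^4 := by positivity
    have hS : (0:ℝ) < 72 + 54*y + 13*y^2 + 1*y^3 + 192*x + 113*x*y + 20*x*y^2 + 1*x*y^3 + 186*x^2 + 75*x^2*y + 7*x^2*y^2 + 78*x^3 + 16*x^3*y + 12*x^4 := by positivity
    have hq : beta1 d1 d2 k =
        (36 + 2*y + 80*x + 5*x*y + 63*x^2 + 4*x^2*y + 22*x^3 + 1*x^3*y + 3*x^4)*(1-k)^2 + (120 + 46*y + 3*y^2 + 266*x + 80*x*y + 5*x*y^2 + 221*x^2 + 48*x^2*y + 2*x^2*y^2 + 83*x^3 + 10*x^3*y + 12*x^4)*(k*(1-k)) + (72 + 54*y + 13*y^2 + 1*y^3 + 192*x + 113*x*y + 20*x*y^2 + 1*x*y^3 + 186*x^2 + 75*x^2*y + 7*x^2*y^2 + 78*x^3 + 16*x^3*y + 12*x^4)*k^2 := by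
      unfold beta1; rw [hxe, hye]; ring
    rw [hq]
    rcases le_or_gt k (1/2) with hc | hc
    · have p1 : (0:ℝ) < (36 + 2*y + 80*x + 5*x*y + 63*x^2 + 4*x^2*y + 22*x^3 + 1*x^3*y + 3*x^4)*(1-k)^2 := mul_pos hC (pow_pos (by linarith) 2)
      have p2 : (0:ℝ) ≤ (120 + 46*y + 3*y^2 + 266*x + 80*x*y + 5*x*y^2 + 221*x^2 + 48*x^2*y + 2*x^2*y^2 + 83*x^3 + 10*x^3*y + 12*x^4)*(k*(1-k)) := mul_nonneg hM hkk
      have p3 : (0:ℝ) ≤ (72 + 54*y + 13*y^2 + 1*y^3 + 192*x + 113*x*y + 20*x*y^2 + 1*x*y^3 + 186*x^2 + 75*x^2*y + 7*x^2*y^2 + 78*x^3 + 16*x^3*y + 12*x^4)*k^2 := mul_nonneg hS.le (sq_nonneg k)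
      linarith
    · have p1 : (0:ℝ) ≤ (36 + 2*y + 80*x + 5*x*y + 63*x^2 + 4*x^2*y + 22*x^3 + 1*x^3*y + 3*x^4)*(1-k)^2 := mul_nonneg hC.le (sq_nonneg (1-k))
      have p2 : (0:ℝ) ≤ (120 + 46*y + 3*y^2 + 266*x + 80*x*y + 5*x*y^2 + 221*x^2 + 48*x^2*y + 2*x^2*y^2 + 83*x^3 + 10*x^3*y + 12*x^4)*(k*(1-k)) := mul_nonneg hM hkk
      have p3 : (0:ℝ) < (72 + 54*y + 13*y^2 + 1*y^3 + 192*x + 113*x*y + 20*x*y^2 + 1*x*y^3 + 186*x^2 + 75*x^2*y + 7*x^2*y^2 + 78*x^3 + 16*x^3*y + 12*x^4)*k^2 := mul_pos hS (pow_pos (by linarith) 2)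
      linarith
end
end

section
/- For all natural numbers d1, d2 with 2 ≤ d1 ≤ d2: for every k ∈ [0,1] one has (2*d1 + d2)*β0(k) ≥ β1(k), with equality at k = 1; equivalently, the minimum of β0(k)/β1(k) over k ∈ [0,1] equals 1/(2*d1 + d2). -/
noncomputable section

open PaperDefs

/-- for every `k ∈ [0,1]` one has `(2d1+d2)β₀(k) ≥ β₁(k)` with equality
at `k = 1`; equivalently the minimum of `β₀/β₁` over `[0,1]` is `1/(2d1+d2)`. -/
theorem statement16 (d1 d2 : ℕ) (h1 : 2 ≤ d1) (h2 : d1 ≤ d2) :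
    (∀ k ∈ Set.Icc (0:ℝ) 1, beta1 d1 d2 k ≤ (2*(d1:ℝ)+(d2:ℝ))*beta0 d1 d2 k) ∧
    (2*(d1:ℝ)+(d2:ℝ))*beta0 d1 d2 1 = beta1 d1 d2 1 ∧
    IsLeast ((fun k : ℝ => beta0 d1 d2 k / beta1 d1 d2 k) '' Set.Icc (0:ℝ) 1)
      (1/(2*(d1:ℝ)+(d2:ℝ))) := by
  have hd1 : (2:ℝ) ≤ (d1:ℝ) := by exact_mod_cast h1
  have hd2 : (d1:ℝ) ≤ (d2:ℝ) := by exact_mod_cast h2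
  have hD : (0:ℝ) < 2*(d1:ℝ)+(d2:ℝ) := by linarith
  have key : ∀ k ∈ Set.Icc (0:ℝ) 1, beta1 d1 d2 k ≤ (2*(d1:ℝ)+(d2:ℝ))*beta0 d1 d2 k := by
    rintro k ⟨hk0, hk1⟩
    have h : (0:ℝ) ≤ (1-k)*((d2:ℝ)-2)*(2*(d1:ℝ)*((d1:ℝ)-1)+(2*(d1:ℝ)-1)*(d2:ℝ)*k) := by
      apply mul_nonneg (mul_nonneg (by linarith) (by linarith))
      linarith [mul_nonneg (mul_nonneg (by linarith : (0:ℝ) ≤ 2*(d1:ℝ)-1) (by linarith : (0:ℝ) ≤ (d2:ℝ))) hk0, mul_nonneg (by linarith : (0:ℝ) ≤ (d1:ℝ)) (by linarith : (0:ℝ) ≤ (d1:ℝ)-1)]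
    simp only [beta0, beta1]
    linarith [h]
  have hc : (0:ℝ) < 2*(d1:ℝ)^4 + (d1:ℝ)^3*(d2:ℝ) - 2*(d1:ℝ)^2*(d2:ℝ) + 2*(d1:ℝ)^2 + (d1:ℝ)*(d2:ℝ) - 4*(d1:ℝ) := by
    nlinarith [mul_nonneg (mul_nonneg (by linarith : (0:ℝ) ≤ (d1:ℝ)) (sq_nonneg ((d1:ℝ)-1))) (by linarith : (0:ℝ) ≤ (d2:ℝ)), sq_nonneg ((d1:ℝ)-1), mul_nonneg (by linarith : (0:ℝ) ≤ (d1:ℝ)-2) (by linarith : (0:ℝ) ≤ (d1:ℝ))]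
  have hbc : (0:ℝ) < (4*(d1:ℝ)^3*(d2:ℝ) + 2*(d1:ℝ)^2*(d2:ℝ)^2 - 4*(d1:ℝ)^3 - 2*(d1:ℝ)^2*(d2:ℝ) - 3*(d1:ℝ)*(d2:ℝ)^2 + 4*(d1:ℝ)*(d2:ℝ) + (d2:ℝ)^2 + 4*(d1:ℝ) - 2*(d2:ℝ)) + (2*(d1:ℝ)^4 + (d1:ℝ)^3*(d2:ℝ) - 2*(d1:ℝ)^2*(d2:ℝ) + 2*(d1:ℝ)^2 + (d1:ℝ)*(d2:ℝ) - 4*(d1:ℝ)) := by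
    nlinarith [mul_nonneg (by linarith : (0:ℝ) ≤ (d1:ℝ)-2) (by linarith : (0:ℝ) ≤ (d2:ℝ)-2), sq_nonneg ((d1:ℝ)-(d2:ℝ))]
  have h11 : (0:ℝ) < (2*(d1:ℝ)+(d2:ℝ))*((d1:ℝ)-1)*((d1:ℝ)+(d2:ℝ))*((d1:ℝ)+(d2:ℝ)-1) :=
    mul_pos (mul_pos (mul_pos hD (by linarith)) (by linarith)) (by linarith)
  have hpos : ∀ k ∈ Set.Icc (0:ℝ) 1, 0 < beta1 d1 d2 k := by
    rintro k ⟨hk0, hk1⟩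
    simp only [beta1]
    rcases eq_or_lt_of_le hk1 with hk1' | hk1'
    · subst hk1'
      linarith [h11]
    · rcases le_or_gt 0 (2*(d1:ℝ)^2*(d2:ℝ)^2 + (d1:ℝ)*(d2:ℝ)^3 - 4*(d1:ℝ)^2*(d2:ℝ) - 2*(d1:ℝ)*(d2:ℝ)^2 - (d2:ℝ)^3 - 2*(d1:ℝ)*(d2:ℝ) + 2*(d2:ℝ)) with ha | ha
      · linarith [mul_nonneg ha (sq_nonneg k), mul_nonneg hk0 hbc.le, mul_pos (by linarith : (0:ℝ) < 1-k) hc]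
      · linarith [mul_nonneg (mul_nonneg (neg_nonneg.2 ha.le) hk0) (by linarith : (0:ℝ) ≤ 1-k), mul_nonneg hk0 h11.le, mul_pos (by linarith : (0:ℝ) < 1-k) hc]
  have h1mem : (1:ℝ) ∈ Set.Icc (0:ℝ) 1 := ⟨zero_le_one, le_refl 1⟩
  have heq : (2*(d1:ℝ)+(d2:ℝ))*beta0 d1 d2 1 = beta1 d1 d2 1 := by
    simp only [beta0, beta1]; ring
  refine ⟨key, heq, ⟨⟨1, h1mem, ?_⟩, ?_⟩⟩
  · have hp := hpos 1 h1mem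
    show beta0 (d1:ℝ) (d2:ℝ) 1 / beta1 (d1:ℝ) (d2:ℝ) 1 = 1/(2*(d1:ℝ)+(d2:ℝ))
    rw [div_eq_div_iff hp.ne' hD.ne']
    linarith [heq]
  · rintro y ⟨k, hk, rfl⟩
    have hp := hpos k hk
    rw [div_le_div_iff₀ hD hp]
    have := key k hk
    linarith
end
end

section
/- For all natural numbers d1, d2 with 2 ≤ d1 ≤ d2: θ2(k) < 0 for all k ∈ [0,1], θ0(k) ≥ 0 for all k ∈ [0,1], and θ0(k) = 0 for k ∈ [0,1] if and only if k = 0. -/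
noncomputable section

namespace Statement19Aux

set_option maxHeartbeats 1600000

lemma theta2a_pos (a b k : ℝ) (ha : 2 ≤ a) (hab : a ≤ b)
    (hk0 : 0 ≤ k) (hk1 : k ≤ 1) : 0 < PaperDefs.theta2a a b k := by
  have hx : (0:ℝ) ≤ a - 2 := by linarith
  have hy : (0:ℝ) ≤ b - a := by linarith
  have hB0 : (24:ℝ) ≤ (24 + 4*(b-a) + 36*(a-2) + 8*(a-2)*(b-a) + 22*(a-2)^2 + 5*(a-2)^2*(b-a) + 7*(a-2)^3 + 1*(a-2)^3*(b-a) + 1*(a-2)^4) := by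
    linarith [hx, hy, mul_nonneg hx hy, pow_nonneg hx 2, pow_nonneg hx 3, pow_nonneg hx 4,
      pow_nonneg hy 2, pow_nonneg hy 3, mul_nonneg (pow_nonneg hx 2) hy,
      mul_nonneg (pow_nonneg hx 3) hy, mul_nonneg hx (pow_nonneg hy 2),
      mul_nonneg (pow_nonneg hx 2) (pow_nonneg hy 2), mul_nonneg hx (pow_nonneg hy 3)]
  have hB1 : (0:ℝ) ≤ (48 + 24*(b-a) + 4*(b-a)^2 + 88*(a-2) + 44*(a-2)*(b-a) + 6*(a-2)*(b-a)^2 + 68*(a-2)^2 + 28*(a-2)^2*(b-a) + 2*(a-2)^2*(b-a)^2 + 26*(a-2)^3 + 6*(a-2)^3*(b-a) + 4*(a-2)^4) := by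
    linarith [hx, hy, mul_nonneg hx hy, pow_nonneg hx 2, pow_nonneg hx 3, pow_nonneg hx 4,
      pow_nonneg hy 2, pow_nonneg hy 3, mul_nonneg (pow_nonneg hx 2) hy,
      mul_nonneg (pow_nonneg hx 3) hy, mul_nonneg hx (pow_nonneg hy 2),
      mul_nonneg (pow_nonneg hx 2) (pow_nonneg hy 2), mul_nonneg hx (pow_nonneg hy 3)]
  have hB2 : (12:ℝ) ≤ (12 + 16*(b-a) + 7*(b-a)^2 + 1*(b-a)^3 + 44*(a-2) + 44*(a-2)*(b-a) + 13*(a-2)*(b-a)^2 + 1*(a-2)*(b-a)^3 + 51*(a-2)^2 + 34*(a-2)^2*(b-a) + 5*(a-2)^2*(b-a)^2 + 24*(a-2)^3 + 8*(a-2)^3*(b-a) + 4*(a-2)^4) := by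
    linarith [hx, hy, mul_nonneg hx hy, pow_nonneg hx 2, pow_nonneg hx 3, pow_nonneg hx 4,
      pow_nonneg hy 2, pow_nonneg hy 3, mul_nonneg (pow_nonneg hx 2) hy,
      mul_nonneg (pow_nonneg hx 3) hy, mul_nonneg hx (pow_nonneg hy 2),
      mul_nonneg (pow_nonneg hx 2) (pow_nonneg hy 2), mul_nonneg hx (pow_nonneg hy 3)]
  have hid : PaperDefs.theta2a a b k =
      (24 + 4*(b-a) + 36*(a-2) + 8*(a-2)*(b-a) + 22*(a-2)^2 + 5*(a-2)^2*(b-a) + 7*(a-2)^3 + 1*(a-2)^3*(b-a) + 1*(a-2)^4)*(1-k)^2 + (48 + 24*(b-a) + 4*(b-a)^2 + 88*(a-2) + 44*(a-2)*(b-a) + 6*(a-2)*(b-a)^2 + 68*(a-2)^2 + 28*(a-2)^2*(b-a) + 2*(a-2)^2*(b-a)^2 + 26*(a-2)^3 + 6*(a-2)^3*(b-a) + 4*(a-2)^4)*(k*(1-k)) + (12 + 16*(b-a) + 7*(b-a)^2 + 1*(b-a)^3 + 44*(a-2) + 44*(a-2)*(b-a) + 13*(a-2)*(b-a)^2 + 1*(a-2)*(b-a)^3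 + 51*(a-2)^2 + 34*(a-2)^2*(b-a) + 5*(a-2)^2*(b-a)^2 + 24*(a-2)^3 + 8*(a-2)^3*(b-a) + 4*(a-2)^4)*k^2 := by
    unfold PaperDefs.theta2a; ring
  rw [hid]
  have hkk : (0:ℝ) ≤ k*(1-k) := mul_nonneg hk0 (by linarith)
  nlinarith [sq_nonneg (1-k), sq_nonneg k, sq_nonneg (1-2*k), hkk, hB0, hB1, hB2]

lemma theta2b_neg (a b k : ℝ) (ha : 2 ≤ a) (hab : a ≤ b)
    (hk0 : 0 ≤ k) (hk1 : k ≤ 1) : PaperDefs.theta2b a b k < 0 := by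
  have hx : (0:ℝ) ≤ a - 2 := by linarith
  have hy : (0:ℝ) ≤ b - a := by linarith
  have hC0 : (16:ℝ) ≤ (16 + 40*(a-2) + 36*(a-2)^2 + 14*(a-2)^3 + 2*(a-2)^4) := by
    linarith [hx, hy, mul_nonneg hx hy, pow_nonneg hx 2, pow_nonneg hx 3, pow_nonneg hx 4,
      pow_nonneg hy 2, pow_nonneg hy 3, mul_nonneg (pow_nonneg hx 2) hy,
      mul_nonneg (pow_nonneg hx 3) hy, mul_nonneg hx (pow_nonneg hy 2),
      mul_nonneg (pow_nonneg hx 2) (pow_nonneg hy 2), mul_nonneg hx (pow_nonneg hy 3)]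
  have hC1 : (0:ℝ) ≤ (72 + 20*(b-a) + 180*(a-2) + 40*(a-2)*(b-a) + 162*(a-2)^2 + 25*(a-2)^2*(b-a) + 63*(a-2)^3 + 5*(a-2)^3*(b-a) + 9*(a-2)^4) := by
    linarith [hx, hy, mul_nonneg hx hy, pow_nonneg hx 2, pow_nonneg hx 3, pow_nonneg hx 4,
      pow_nonneg hy 2, pow_nonneg hy 3, mul_nonneg (pow_nonneg hx 2) hy,
      mul_nonneg (pow_nonneg hx 3) hy, mul_nonneg hx (pow_nonneg hy 2),
      mul_nonneg (pow_nonneg hx 2) (pow_nonneg hy 2), mul_nonneg hx (pow_nonneg hy 3)]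
  have hC2 : (0:ℝ) ≤ (88 + 52*(b-a) + 8*(b-a)^2 + 224*(a-2) + 106*(a-2)*(b-a) + 12*(a-2)*(b-a)^2 + 206*(a-2)^2 + 68*(a-2)^2*(b-a) + 4*(a-2)^2*(b-a)^2 + 82*(a-2)^3 + 14*(a-2)^3*(b-a) + 12*(a-2)^4) := by
    linarith [hx, hy, mul_nonneg hx hy, pow_nonneg hx 2, pow_nonneg hx 3, pow_nonneg hx 4,
      pow_nonneg hy 2, pow_nonneg hy 3, mul_nonneg (pow_nonneg hx 2) hy,
      mul_nonneg (pow_nonneg hx 3) hy, mul_nonneg hx (pow_nonneg hy 2),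
      mul_nonneg (pow_nonneg hx 2) (pow_nonneg hy 2), mul_nonneg hx (pow_nonneg hy 3)]
  have hC3 : (12:ℝ) ≤ (12 + 16*(b-a) + 7*(b-a)^2 + 1*(b-a)^3 + 44*(a-2) + 44*(a-2)*(b-a) + 13*(a-2)*(b-a)^2 + 1*(a-2)*(b-a)^3 + 51*(a-2)^2 + 34*(a-2)^2*(b-a) + 5*(a-2)^2*(b-a)^2 + 24*(a-2)^3 + 8*(a-2)^3*(b-a) + 4*(a-2)^4) := by
    linarith [hx, hy, mul_nonneg hx hy, pow_nonneg hx 2, pow_nonneg hx 3, pow_nonneg hx 4,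
      pow_nonneg hy 2, pow_nonneg hy 3, mul_nonneg (pow_nonneg hx 2) hy,
      mul_nonneg (pow_nonneg hx 3) hy, mul_nonneg hx (pow_nonneg hy 2),
      mul_nonneg (pow_nonneg hx 2) (pow_nonneg hy 2), mul_nonneg hx (pow_nonneg hy 3)]
  have hid : -PaperDefs.theta2b a b k =
      (16 + 40*(a-2) + 36*(a-2)^2 + 14*(a-2)^3 + 2*(a-2)^4)*(1-k)^3 + (72 + 20*(b-a) + 180*(a-2) + 40*(a-2)*(b-a) + 162*(a-2)^2 + 25*(a-2)^2*(b-a) + 63*(a-2)^3 + 5*(a-2)^3*(b-a) + 9*(a-2)^4)*(k*(1-k)^2) + (88 + 52*(b-a) + 8*(b-a)^2 + 224*(a-2) + 106*(a-2)*(b-a) + 12*(a-2)*(b-a)^2 + 206*(a-2)^2 + 68*(a-2)^2*(b-a) + 4*(a-2)^2*(b-a)^2 + 82*(a-2)^3 + 14*(a-2)^3*(b-a) + 12*(a-2)^4)*(k^2*(1-k)) + (12 + 16*(b-a) + 7*(b-a)^2 + 1*(b-a)^3 + 44*(a-2) + 44*(a-2)*(b-a) + 13*(a-2)*(b-a)^2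 + 1*(a-2)*(b-a)^3 + 51*(a-2)^2 + 34*(a-2)^2*(b-a) + 5*(a-2)^2*(b-a)^2 + 24*(a-2)^3 + 8*(a-2)^3*(b-a) + 4*(a-2)^4)*k^3 := by
    unfold PaperDefs.theta2b; ring
  have h1 : (0:ℝ) ≤ (1-k)^3 := pow_nonneg (by linarith) 3
  have h2 : (0:ℝ) ≤ k*(1-k)^2 := mul_nonneg hk0 (sq_nonneg _)
  have h3 : (0:ℝ) ≤ k^2*(1-k) := mul_nonneg (sq_nonneg _) (by linarith)
  have h4 : (0:ℝ) ≤ k^3 := pow_nonneg hk0 3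
  have hcube : (1:ℝ)/4 ≤ (1-k)^3 + k^3 := by nlinarith [sq_nonneg (1-2*k)]
  nlinarith [hid, mul_nonneg (by linarith : (0:ℝ) ≤ (16 + 40*(a-2) + 36*(a-2)^2 + 14*(a-2)^3 + 2*(a-2)^4) - 16) h1,
    mul_nonneg hC1 h2, mul_nonneg hC2 h3,
    mul_nonneg (by linarith : (0:ℝ) ≤ (12 + 16*(b-a) + 7*(b-a)^2 + 1*(b-a)^3 + 44*(a-2) + 44*(a-2)*(b-a) + 13*(a-2)*(b-a)^2 + 1*(a-2)*(b-a)^3 + 51*(a-2)^2 + 34*(a-2)^2*(b-a) + 5*(a-2)^2*(b-a)^2 + 24*(a-2)^3 + 8*(a-2)^3*(b-a) + 4*(a-2)^4) - 12) h4, hcube]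

end Statement19Aux

open PaperDefs

/-- `θ₂ < 0` on `[0,1]`, `θ₀ ≥ 0` on `[0,1]`, and for `k ∈ [0,1]` one has
`θ₀(k) = 0` if and only if `k = 0`. -/
theorem statement19 (d1 d2 : ℕ) (h1 : 2 ≤ d1) (h2 : d1 ≤ d2) :
    (∀ k ∈ Set.Icc (0:ℝ) 1, theta2 d1 d2 k < 0) ∧
    (∀ k ∈ Set.Icc (0:ℝ) 1, 0 ≤ theta0 d1 d2 k) ∧
    (∀ k ∈ Set.Icc (0:ℝ) 1, theta0 d1 d2 k = 0 ↔ k = 0) := by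
  have ha : (2:ℝ) ≤ (d1:ℝ) := by exact_mod_cast h1
  have hab : (d1:ℝ) ≤ (d2:ℝ) := by exact_mod_cast h2
  set a : ℝ := (d1:ℝ)
  set b : ℝ := (d2:ℝ)
  have ha0 : (0:ℝ) < a := by linarith
  have hb1 : (1:ℝ) ≤ b := by linarith
  have hM : ∀ k : ℝ, 0 ≤ k → k ≤ 1 →
      0 < b^2*(b-1)^4*(2*a + b*k)*((2*a*b - 2*a + b)*k + 2*a^2 + 2*a) := by
    intro k hk0 hk1
    have e1 : (0:ℝ) < b^2 := by positivity
    have e2 : (0:ℝ) < (b-1)^4 := by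
      have : (0:ℝ) < b - 1 := by linarith
      positivity
    have e3 : (0:ℝ) < 2*a + b*k := by nlinarith
    have e4 : (0:ℝ) < (2*a*b - 2*a + b)*k + 2*a^2 + 2*a := by
      have h6 : (0:ℝ) ≤ 2*a*b - 2*a + b := by nlinarith
      nlinarith [mul_nonneg h6 hk0]
    positivity
  have h0b : ∀ k : ℝ, 0 ≤ k → k ≤ 1 → 0 < PaperDefs.theta0b a b k := by
    intro k hk0 hk1
    unfold PaperDefs.theta0b
    have c1 : (0:ℝ) ≤ (2*a^2 - 1)*b^2*k^2 := by
      apply mul_nonneg (mul_nonneg (by nlinarith) (sq_nonneg b)) (sq_nonneg k)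
    have c2 : (0:ℝ) ≤ (4*a^3 - 2*a^2 - 2*a)*b*k := by
      have : (0:ℝ) ≤ 4*a^3 - 2*a^2 - 2*a := by nlinarith [sq_nonneg a, mul_le_mul_of_nonneg_left ha (by positivity : (0:ℝ) ≤ a*a)]
      apply mul_nonneg (mul_nonneg this (by linarith)) hk0
    have c3 : (0:ℝ) < 2*a^3*(a-1) := by
      have h3 : (0:ℝ) < a^3 := by positivity
      nlinarith
    nlinarith [c1, c2, c3]
  have h0a_eq : ∀ k : ℝ, PaperDefs.theta0a a b k =
      k * (b^2*(b-1)^4*(2*a + b*k)*((2*a*b - 2*a + b)*k + 2*a^2 + 2*a)) := by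
    intro k; unfold PaperDefs.theta0a; ring
  refine ⟨?_, ?_, ?_⟩
  · rintro k ⟨hk0, hk1⟩
    have h2a := Statement19Aux.theta2a_pos a b k ha hab hk0 hk1
    have h2b := Statement19Aux.theta2b_neg a b k ha hab hk0 hk1
    unfold PaperDefs.theta2
    have hpos : (0:ℝ) < 4*a^4*(a+1)^2 := by positivity
    have := mul_pos (mul_pos hpos h2a) (neg_pos.mpr h2b)
    nlinarith [this]
  · rintro k ⟨hk0, hk1⟩
    unfold PaperDefs.theta0
    have := hM k hk0 hk1
    have h0b' := h0b k hk0 hk1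
    rw [h0a_eq k]
    have : 0 ≤ k * (b^2*(b-1)^4*(2*a + b*k)*((2*a*b - 2*a + b)*k + 2*a^2 + 2*a)) :=
      mul_nonneg hk0 (le_of_lt this)
    exact mul_nonneg this (le_of_lt h0b')
  · rintro k ⟨hk0, hk1⟩
    have hMk := hM k hk0 hk1
    have h0b' := h0b k hk0 hk1
    constructor
    · intro h
      unfold PaperDefs.theta0 at h
      rw [h0a_eq k] at h
      rcases mul_eq_zero.mp h with h' | h'
      · rcases mul_eq_zero.mp h' with h'' | h''
        · exact h''
        · exact absurd h'' (ne_of_gt hMk)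
      · exact absurd h' (ne_of_gt h0b')
    · intro h
      subst h
      unfold PaperDefs.theta0
      rw [h0a_eq 0]
      ring
end
end
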